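/- arXiv:1008.0227 — 3 statements merged into one kernel-verified Lean document; each statement's English description precedes it below -/
import Mathlib

section
/- A necessary and sufficient condition for the parallel Glauber dynamics to be an irreducible and aperiodic Markov chain on the set Ω of feasible schedules is that q_v := Σ_{m∈𝓘, m∋v} q_m > 0 for every vertex v ∈ V (equivalently, the union of the independent sets m with q_m > 0 equals V). In this case the chain is reversible with respect to the product-form distribution π(σ) = ∏_{i:σ_i=1} λ_i / Σ_{σ'∈Ω} ∏_{i:σ'_i=1} λ_i, which is therefore its unique stationary distribution. -/
open Finset

variable {V : Type*} [Fintype V] [DecidableEq V]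

/-- A finite set of vertices is independent in `G`. -/
def IsInd (G : SimpleGraph V) [DecidableRel G.Adj] (s : Finset V) : Prop :=
  ∀ v ∈ s, ∀ w ∈ s, ¬ G.Adj v w

instance (G : SimpleGraph V) [DecidableRel G.Adj] (s : Finset V) :
    Decidable (IsInd G s) := by
  unfold IsInd; infer_instance

/-- `q_v`: probability that vertex `v` belongs to the decision schedule. -/
noncomputable def qVert (q : Finset V → ℝ) (v : V) : ℝ :=
  ∑ m ∈ univ.filter (fun m => v ∈ m), q m

/-- Per-vertex factor of the transition probability of the parallel Glauber
dynamics, given current schedule `σ`, decision schedule `m`, next schedule `σ'`. -/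
noncomputable def stepFactor (G : SimpleGraph V) [DecidableRel G.Adj] (lam : V → ℝ)
    (σ m σ' : Finset V) (v : V) : ℝ :=
  if v ∈ m then
    (if ∃ w ∈ σ, G.Adj v w then (if v ∈ σ' then 0 else 1)
     else (if v ∈ σ' then lam v / (1 + lam v) else 1 / (1 + lam v)))
  else (if (v ∈ σ' ↔ v ∈ σ) then 1 else 0)

/-- Transition matrix of the parallel Glauber dynamics. -/
noncomputable def pgdP (G : SimpleGraph V) [DecidableRel G.Adj] (lam : V → ℝ)
    (q : Finset V → ℝ) (σ σ' : Finset V) : ℝ :=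
  ∑ m : Finset V, q m * ∏ v : V, stepFactor G lam σ m σ' v

/-- Distribution at time `t` of a Markov chain with transition matrix `P`
started at state `x`. -/
noncomputable def chainDist {S : Type*} [Fintype S] [DecidableEq S]
    (P : S → S → ℝ) (x : S) : ℕ → S → ℝ
  | 0 => fun s => if s = x then 1 else 0
  | t + 1 => fun s => ∑ s' : S, chainDist P x t s' * P s' s

/-- `t`-step transition probabilities. -/
noncomputable def chainPow {S : Type*} [Fintype S] [DecidableEq S]
    (P : S → S → ℝ) : ℕ → S → S → ℝ
  | 0 => fun x y => if x = y then 1 else 0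
  | t + 1 => fun x y => ∑ z : S, chainPow P t x z * P z y

/-- Total variation distance between two distributions on a finite set. -/
noncomputable def tvDist {S : Type*} [Fintype S] (μ ν : S → ℝ) : ℝ :=
  (1 / 2) * ∑ s : S, |μ s - ν s|

/-- The product-form distribution on independent sets with fugacities `lam`. -/
noncomputable def prodForm (G : SimpleGraph V) [DecidableRel G.Adj]
    (lam : V → ℝ) (σ : Finset V) : ℝ :=
  if IsInd G σ then
    (∏ v ∈ σ, lam v) / (∑ σ' ∈ univ.filter (fun s => IsInd G s), ∏ v ∈ σ', lam v)
  else 0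

/-- Mixing time: the maximum over starting states in `states` of the first time
the distribution is within `1/e` of `π` in total variation. -/
noncomputable def mixTime {S : Type*} [Fintype S] [DecidableEq S]
    (P : S → S → ℝ) (π : S → ℝ) (states : Finset S) : ℕ :=
  states.sup fun x => sInf {t : ℕ | tvDist (chainDist P x t) π ≤ 1 / Real.exp 1}

/-- A finite Markov chain restricted to the states in `states` is irreducible
if every state can reach every other state in a positive number of steps. -/
def ChainIrreducible {S : Type*} [Fintype S] [DecidableEq S]
    (P : S → S → ℝ) (states : Set S) : Prop :=
  ∀ x ∈ states, ∀ y ∈ states, ∃ t : ℕ, 0 < t ∧ 0 < chainPow P t x y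

/-- A finite Markov chain restricted to the states in `states` is aperiodic
if, for every state, the gcd of its positive return times is `1` (i.e. every
common divisor of the return times equals `1`). -/
def ChainAperiodic {S : Type*} [Fintype S] [DecidableEq S]
    (P : S → S → ℝ) (states : Set S) : Prop :=
  ∀ x ∈ states, ∀ d : ℕ, (∀ t : ℕ, 0 < t → 0 < chainPow P t x x → d ∣ t) → d = 1


set_option linter.unusedSectionVars false
set_option linter.unusedVariables false
section PGDAux

variable {V : Type*} [Fintype V] [DecidableEq V]
variable {G : SimpleGraph V} [DecidableRel G.Adj] {lam : V → ℝ} {q : Finset V → ℝ}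

lemma stepFactor_nonneg (hlam : ∀ v, 0 < lam v) (σ m σ' : Finset V) (v : V) :
    0 ≤ stepFactor G lam σ m σ' v := by
  have h1 : (0:ℝ) < 1 + lam v := by linarith [hlam v]
  have h2 : 0 ≤ lam v / (1 + lam v) := div_nonneg (hlam v).le h1.le
  have h3 : (0:ℝ) ≤ 1 / (1 + lam v) := div_nonneg zero_le_one h1.le
  unfold stepFactor
  split_ifs <;> linarith

lemma pgdP_nonneg (hlam : ∀ v, 0 < lam v) (hq0 : ∀ m, 0 ≤ q m) (σ σ' : Finset V) :
    0 ≤ pgdP G lam q σ σ' :=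
  Finset.sum_nonneg fun m _ => mul_nonneg (hq0 m)
    (Finset.prod_nonneg fun v _ => stepFactor_nonneg hlam σ m σ' v)

lemma chainPow_nonneg' {S : Type*} [Fintype S] [DecidableEq S] {P : S → S → ℝ}
    (hP : ∀ x y, 0 ≤ P x y) (t : ℕ) : ∀ x y, 0 ≤ chainPow P t x y := by
  induction t with
  | zero => intro x y; unfold chainPow; split <;> norm_num
  | succ t ih =>
      intro x y
      unfold chainPow
      exact Finset.sum_nonneg fun z _ => mul_nonneg (ih x z) (hP z y)

lemma chainPow_one {S : Type*} [Fintype S] [DecidableEq S] (P : S → S → ℝ) (x y : S) :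
    chainPow P 1 x y = P x y := by
  show (∑ z : S, chainPow P 0 x z * P z y) = P x y
  simp [chainPow, ite_mul, Finset.sum_ite_eq]

lemma chainPow_trans_pos {S : Type*} [Fintype S] [DecidableEq S] {P : S → S → ℝ}
    (hP : ∀ x y, 0 ≤ P x y) {s : ℕ} {x y : S} (hxy : 0 < chainPow P s x y) :
    ∀ {t : ℕ} {z : S}, 0 < chainPow P t y z → 0 < chainPow P (s + t) x z := by
  intro t
  induction t with
  | zero =>
      intro z h
      unfold chainPow at h
      by_cases hyz : y = z
      · subst hyz; simpa using hxy
      · simp [hyz] at h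
  | succ t ih =>
      intro z h
      unfold chainPow at h
      obtain ⟨w, hw⟩ := Finset.exists_lt_of_sum_lt (g := fun w => chainPow P t y w * P w z)
        (f := fun _ => (0:ℝ)) (by simpa using h)
      have hw' : 0 < chainPow P t y w * P w z := hw.2
      have h1 : 0 < chainPow P t y w := by
        rcases mul_pos_iff.mp hw' with ⟨a, _⟩ | ⟨a, _⟩
        · exact a
        · exact absurd a (not_lt.mpr (chainPow_nonneg' hP t y w))
      have h2 : 0 < P w z := by
        rcases mul_pos_iff.mp hw' with ⟨_, b⟩ | ⟨_, b⟩
        · exact b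
        · exact absurd b (not_lt.mpr (hP w z))
      have h3 : 0 < chainPow P (s + t) x w := ih h1
      show 0 < ∑ w' : S, chainPow P (s + t) x w' * P w' z
      exact Finset.sum_pos' (fun w' _ => mul_nonneg (chainPow_nonneg' hP _ _ _) (hP _ _))
        ⟨w, Finset.mem_univ w, mul_pos h3 h2⟩

end PGDAux
set_option linter.unusedSectionVars false

section PGDAux2

variable {V : Type*} [Fintype V] [DecidableEq V]
variable {G : SimpleGraph V} [DecidableRel G.Adj] {lam : V → ℝ} {q : Finset V → ℝ}

lemma prod_stepFactor_pos (hlam : ∀ v, 0 < lam v) {σ : Finset V} (m σ' : Finset V)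
    (hout : ∀ v, v ∉ m → (v ∈ σ' ↔ v ∈ σ))
    (hin : ∀ v ∈ m, v ∈ σ' → ¬ ∃ w ∈ σ, G.Adj v w) :
    0 < ∏ v : V, stepFactor G lam σ m σ' v := by
  apply Finset.prod_pos
  intro v _
  have h1 : (0:ℝ) < 1 + lam v := by linarith [hlam v]
  unfold stepFactor
  by_cases hm : v ∈ m
  · rw [if_pos hm]
    by_cases hA : ∃ w ∈ σ, G.Adj v w
    · rw [if_pos hA, if_neg (fun h => hin v hm h hA)]
      norm_num
    · rw [if_neg hA]
      split
      · exact div_pos (hlam v) h1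
      · exact div_pos one_pos h1
  · rw [if_neg hm, if_pos (hout v hm)]
    norm_num

lemma pgdP_pos_of (hlam : ∀ v, 0 < lam v) (hq0 : ∀ m, 0 ≤ q m)
    {σ : Finset V} {m0 : Finset V} (hm0 : 0 < q m0) (σ' : Finset V)
    (hout : ∀ v, v ∉ m0 → (v ∈ σ' ↔ v ∈ σ))
    (hin : ∀ v ∈ m0, v ∈ σ' → ¬ ∃ w ∈ σ, G.Adj v w) :
    0 < pgdP G lam q σ σ' := by
  apply Finset.sum_pos'
  · intro m _
    exact mul_nonneg (hq0 m) (Finset.prod_nonneg fun v _ => stepFactor_nonneg hlam σ m σ' v)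
  · exact ⟨m0, Finset.mem_univ m0, mul_pos hm0 (prod_stepFactor_pos hlam m0 σ' hout hin)⟩

lemma pgdP_self_pos (hlam : ∀ v, 0 < lam v) (hq0 : ∀ m, 0 ≤ q m)
    {σ : Finset V} (hσ : IsInd G σ) {m0 : Finset V} (hm0 : 0 < q m0) :
    0 < pgdP G lam q σ σ := by
  refine pgdP_pos_of hlam hq0 hm0 σ (fun v _ => Iff.rfl) ?_
  rintro v _ hvσ ⟨w, hwσ, hadj⟩
  exact hσ v hvσ w hwσ hadj

lemma pgdP_erase_pos (hlam : ∀ v, 0 < lam v) (hq0 : ∀ m, 0 ≤ q m)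
    {σ : Finset V} (hσ : IsInd G σ) {v0 : V} (hv0 : v0 ∈ σ)
    {m0 : Finset V} (hvm : v0 ∈ m0) (hm0 : 0 < q m0) :
    0 < pgdP G lam q σ (σ.erase v0) := by
  refine pgdP_pos_of hlam hq0 hm0 (σ.erase v0) ?_ ?_
  · intro v hv
    have : v ≠ v0 := fun h => hv (h ▸ hvm)
    simp [Finset.mem_erase, this]
  · rintro v _ hvσ' ⟨w, hwσ, hadj⟩
    exact hσ v (Finset.mem_of_mem_erase hvσ') w hwσ hadj

lemma pgdP_insert_pos (hlam : ∀ v, 0 < lam v) (hq0 : ∀ m, 0 ≤ q m)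
    {σ : Finset V} {v0 : V} (hv0 : v0 ∉ σ) (hins : IsInd G (insert v0 σ))
    {m0 : Finset V} (hvm : v0 ∈ m0) (hm0 : 0 < q m0) :
    0 < pgdP G lam q σ (insert v0 σ) := by
  refine pgdP_pos_of hlam hq0 hm0 (insert v0 σ) ?_ ?_
  · intro v hv
    have : v ≠ v0 := fun h => hv (h ▸ hvm)
    simp [Finset.mem_insert, this]
  · rintro v _ hvσ' ⟨w, hwσ, hadj⟩
    exact hins v hvσ' w (Finset.mem_insert_of_mem hwσ) hadj

lemma pgdP_freeze {v : V} (hv : ∀ m, v ∈ m → q m = 0) {σ σ' : Finset V}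
    (hdiff : ¬ (v ∈ σ' ↔ v ∈ σ)) : pgdP G lam q σ σ' = 0 := by
  apply Finset.sum_eq_zero
  intro m _
  by_cases hm : v ∈ m
  · rw [hv m hm, zero_mul]
  · have : stepFactor G lam σ m σ' v = 0 := by
      unfold stepFactor
      rw [if_neg hm, if_neg hdiff]
    rw [Finset.prod_eq_zero (Finset.mem_univ v) this, mul_zero]

lemma pgdP_support (hqsupp : ∀ m, ¬ IsInd G m → q m = 0)
    {σ σ' : Finset V} (hσ : IsInd G σ) (hσ' : ¬ IsInd G σ') :
    pgdP G lam q σ σ' = 0 := by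
  apply Finset.sum_eq_zero
  intro m _
  by_cases hq : q m = 0
  · rw [hq, zero_mul]
  have hm : IsInd G m := by
    by_contra h; exact hq (hqsupp m h)
  -- find adjacent pair in σ'
  unfold IsInd at hσ'
  push_neg at hσ'
  obtain ⟨u, huσ', w, hwσ', hadj⟩ := hσ'
  have hzero : ∃ x, stepFactor G lam σ m σ' x = 0 := by
    by_cases hum : u ∈ m
    · by_cases hA : ∃ z ∈ σ, G.Adj u z
      · refine ⟨u, ?_⟩
        unfold stepFactor
        rw [if_pos hum, if_pos hA, if_pos huσ']
      · -- w ∉ m since m independent and adj u w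
        have hwm : w ∉ m := fun h => hm u hum w h hadj
        have hwσ : w ∉ σ := fun h => hA ⟨w, h, hadj⟩
        refine ⟨w, ?_⟩
        unfold stepFactor
        rw [if_neg hwm, if_neg (by simp [hwσ, hwσ'])]
    · by_cases huσ : u ∈ σ
      · by_cases hwm : w ∈ m
        · refine ⟨w, ?_⟩
          have hA : ∃ z ∈ σ, G.Adj w z := ⟨u, huσ, hadj.symm⟩
          unfold stepFactor
          rw [if_pos hwm, if_pos hA, if_pos hwσ']
        · have hwσ : w ∉ σ := fun h => hσ u huσ w h hadj
          refine ⟨w, ?_⟩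
          unfold stepFactor
          rw [if_neg hwm, if_neg (by simp [hwσ, hwσ'])]
      · refine ⟨u, ?_⟩
        unfold stepFactor
        rw [if_neg hum, if_neg (by simp [huσ, huσ'])]
  obtain ⟨x, hx⟩ := hzero
  rw [Finset.prod_eq_zero (Finset.mem_univ x) hx, mul_zero]

end PGDAux2
section PGDAux3

variable {V : Type*} [Fintype V] [DecidableEq V]
variable {G : SimpleGraph V} [DecidableRel G.Adj] {lam : V → ℝ} {q : Finset V → ℝ}

lemma sum_prod_stepFactor (hlam : ∀ v, 0 < lam v) (σ m : Finset V) :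
    ∑ σ' : Finset V, ∏ v : V, stepFactor G lam σ m σ' v = 1 := by
  classical
  set fT : V → ℝ := fun v => stepFactor G lam σ m Finset.univ v with hfT
  set fF : V → ℝ := fun v => stepFactor G lam σ m ∅ v with hfF
  have hdep : ∀ (σ' : Finset V) (v : V),
      stepFactor G lam σ m σ' v = if v ∈ σ' then fT v else fF v := by
    intro σ' v
    rw [hfT, hfF]
    unfold stepFactor
    by_cases hm : v ∈ m
    · by_cases hA : ∃ w ∈ σ, G.Adj v w <;> by_cases hσ' : v ∈ σ' <;>
        simp [hm, hA, hσ']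
    · by_cases hσ' : v ∈ σ' <;> by_cases hσ : v ∈ σ <;> simp [hm, hσ', hσ]
  have hsplit : ∀ σ' : Finset V,
      ∏ v : V, stepFactor G lam σ m σ' v = (∏ v ∈ σ', fT v) * ∏ v ∈ Finset.univ \ σ', fF v := by
    intro σ'
    calc ∏ v : V, stepFactor G lam σ m σ' v
        = ∏ v : V, (if v ∈ σ' then fT v else fF v) :=
          Finset.prod_congr rfl fun v _ => hdep σ' v
      _ = (∏ v ∈ Finset.univ.filter (· ∈ σ'), fT v) *
            ∏ v ∈ Finset.univ.filter (¬ · ∈ σ'), fF v := Finset.prod_ite _ _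
      _ = (∏ v ∈ σ', fT v) * ∏ v ∈ Finset.univ \ σ', fF v := by
          congr 1
          · apply Finset.prod_congr _ fun v _ => rfl
            ext v; simp
          · apply Finset.prod_congr _ fun v _ => rfl
            ext v; simp
  have hone : ∀ v : V, fT v + fF v = 1 := by
    intro v
    have h1 : (1:ℝ) + lam v ≠ 0 := by linarith [hlam v]
    rw [hfT, hfF]
    unfold stepFactor
    by_cases hm : v ∈ m
    · by_cases hA : ∃ w ∈ σ, G.Adj v w
      · simp [hm, hA]
      · simp only [hm, hA, if_true, if_false, Finset.mem_univ, Finset.notMem_empty]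
        field_simp; ring
    · by_cases hσ : v ∈ σ <;> simp [hm, hσ]
  calc ∑ σ' : Finset V, ∏ v : V, stepFactor G lam σ m σ' v
      = ∑ σ' ∈ (Finset.univ : Finset V).powerset, (∏ v ∈ σ', fT v) * ∏ v ∈ Finset.univ \ σ', fF v := by
        rw [Finset.powerset_univ]
        exact Finset.sum_congr rfl fun σ' _ => hsplit σ'
    _ = ∏ v : V, (fT v + fF v) := (Finset.prod_add fT fF Finset.univ).symm
    _ = 1 := by rw [Finset.prod_congr rfl fun v _ => hone v]; simp

lemma pgdP_rowsum (hlam : ∀ v, 0 < lam v) (hqsum : ∑ m : Finset V, q m = 1) (σ : Finset V) :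
    ∑ σ' : Finset V, pgdP G lam q σ σ' = 1 := by
  unfold pgdP
  rw [Finset.sum_comm]
  calc ∑ m : Finset V, ∑ σ' : Finset V, q m * ∏ v : V, stepFactor G lam σ m σ' v
      = ∑ m : Finset V, q m * ∑ σ' : Finset V, ∏ v : V, stepFactor G lam σ m σ' v := by
        exact Finset.sum_congr rfl fun m _ => (Finset.mul_sum _ _ _).symm
    _ = ∑ m : Finset V, q m := by
        exact Finset.sum_congr rfl fun m _ => by rw [sum_prod_stepFactor hlam σ m, mul_one]
    _ = 1 := hqsum

end PGDAux3
section PGDAux4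

variable {V : Type*} [Fintype V] [DecidableEq V]
variable {G : SimpleGraph V} [DecidableRel G.Adj] {lam : V → ℝ} {q : Finset V → ℝ}

lemma stepFactor_zero_symm (hlam : ∀ v, 0 < lam v) {m σ σ' : Finset V}
    (hm : IsInd G m) (hσ' : IsInd G σ') {v : V}
    (h : stepFactor G lam σ m σ' v = 0) :
    ∃ w, stepFactor G lam σ' m σ w = 0 := by
  have h1 : (0:ℝ) < 1 + lam v := by linarith [hlam v]
  unfold stepFactor at h
  by_cases hvm : v ∈ m
  · rw [if_pos hvm] at h
    by_cases hA : ∃ w ∈ σ, G.Adj v w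
    · rw [if_pos hA] at h
      have hvσ' : v ∈ σ' := by
        by_contra hc; rw [if_neg hc] at h; exact one_ne_zero h
      obtain ⟨w, hwσ, hadj⟩ := hA
      have hwm : w ∉ m := fun hw => hm v hvm w hw hadj
      have hwσ' : w ∉ σ' := fun hw => hσ' v hvσ' w hw hadj
      refine ⟨w, ?_⟩
      unfold stepFactor
      rw [if_neg hwm, if_neg (by simp [hwσ, hwσ'])]
    · rw [if_neg hA] at h
      exfalso
      by_cases hvσ' : v ∈ σ'
      · rw [if_pos hvσ'] at h
        exact (div_pos (hlam v) h1).ne' h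
      · rw [if_neg hvσ'] at h
        exact (div_pos one_pos h1).ne' h
  · rw [if_neg hvm] at h
    have hdiff : ¬ (v ∈ σ' ↔ v ∈ σ) := by
      by_contra hc; rw [if_pos hc] at h; exact one_ne_zero h
    refine ⟨v, ?_⟩
    unfold stepFactor
    rw [if_neg hvm, if_neg (fun hc => hdiff hc.symm)]

lemma stepFactor_rev (hlam : ∀ v, 0 < lam v) {m σ σ' : Finset V}
    (hm : IsInd G m) (hσ : IsInd G σ) (hσ' : IsInd G σ')
    (hnz : ∀ v, stepFactor G lam σ m σ' v ≠ 0)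
    (hnz' : ∀ v, stepFactor G lam σ' m σ v ≠ 0) (v : V) :
    (if v ∈ σ then lam v else 1) * stepFactor G lam σ m σ' v =
      (if v ∈ σ' then lam v else 1) * stepFactor G lam σ' m σ v := by
  by_cases hvm : v ∈ m
  · have hiff : (∃ w ∈ σ, G.Adj v w) ↔ (∃ w ∈ σ', G.Adj v w) := by
      constructor
      · rintro ⟨w, hw, ha⟩
        have hwm : w ∉ m := fun hwm => hm v hvm w hwm ha
        have h := hnz' w
        unfold stepFactor at h
        rw [if_neg hwm] at h
        have hmem : w ∈ σ ↔ w ∈ σ' := by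
          by_contra hc; rw [if_neg hc] at h; exact h rfl
        exact ⟨w, hmem.mp hw, ha⟩
      · rintro ⟨w, hw, ha⟩
        have hwm : w ∉ m := fun hwm => hm v hvm w hwm ha
        have h := hnz w
        unfold stepFactor at h
        rw [if_neg hwm] at h
        have hmem : w ∈ σ' ↔ w ∈ σ := by
          by_contra hc; rw [if_neg hc] at h; exact h rfl
        exact ⟨w, hmem.mp hw, ha⟩
    by_cases hA : ∃ w ∈ σ, G.Adj v w
    · have hA' : ∃ w ∈ σ', G.Adj v w := hiff.mp hA
      have hvσ : v ∉ σ := by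
        obtain ⟨w, hw, ha⟩ := hA
        exact fun hc => hσ v hc w hw ha
      have hvσ' : v ∉ σ' := by
        obtain ⟨w, hw, ha⟩ := hA'
        exact fun hc => hσ' v hc w hw ha
      unfold stepFactor
      rw [if_pos hvm, if_pos hvm, if_pos hA, if_pos hA', if_neg hvσ, if_neg hvσ',
        if_neg hvσ, if_neg hvσ']
    · have hA' : ¬ ∃ w ∈ σ', G.Adj v w := fun h => hA (hiff.mpr h)
      unfold stepFactor
      rw [if_pos hvm, if_pos hvm, if_neg hA, if_neg hA']
      by_cases h1 : v ∈ σ <;> by_cases h2 : v ∈ σ' <;>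
        simp only [h1, h2, if_true, if_false] <;> ring
  · have h := hnz v
    unfold stepFactor at h ⊢
    rw [if_neg hvm] at h ⊢
    rw [if_neg hvm]
    have hiff : v ∈ σ' ↔ v ∈ σ := by
      by_contra hc; rw [if_neg hc] at h; exact h rfl
    rw [if_pos hiff, if_pos hiff.symm]
    by_cases h1 : v ∈ σ
    · rw [if_pos h1, if_pos (hiff.mpr h1)]
    · rw [if_neg h1, if_neg (fun hc => h1 (hiff.mp hc))]

lemma rev_per_m (hlam : ∀ v, 0 < lam v) {m σ σ' : Finset V}
    (hm : IsInd G m) (hσ : IsInd G σ) (hσ' : IsInd G σ') :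
    (∏ v ∈ σ, lam v) * ∏ v : V, stepFactor G lam σ m σ' v =
      (∏ v ∈ σ', lam v) * ∏ v : V, stepFactor G lam σ' m σ v := by
  by_cases hz : (∃ v, stepFactor G lam σ m σ' v = 0) ∨ (∃ v, stepFactor G lam σ' m σ v = 0)
  · have hz1 : ∃ v, stepFactor G lam σ m σ' v = 0 := by
      rcases hz with h | ⟨v, hv⟩
      · exact h
      · exact stepFactor_zero_symm hlam hm hσ hv
    have hz2 : ∃ v, stepFactor G lam σ' m σ v = 0 := by
      obtain ⟨v, hv⟩ := hz1
      exact stepFactor_zero_symm hlam hm hσ' hv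
    obtain ⟨v1, hv1⟩ := hz1
    obtain ⟨v2, hv2⟩ := hz2
    rw [Finset.prod_eq_zero (Finset.mem_univ v1) hv1,
      Finset.prod_eq_zero (Finset.mem_univ v2) hv2, mul_zero, mul_zero]
  · push_neg at hz
    obtain ⟨hnz, hnz'⟩ := hz
    have hL : ∀ τ : Finset V, (∏ v ∈ τ, lam v) = ∏ v : V, (if v ∈ τ then lam v else 1) := by
      intro τ
      rw [← Finset.prod_filter]
      apply Finset.prod_congr _ fun v _ => rfl
      ext v; simp
    rw [hL σ, hL σ', ← Finset.prod_mul_distrib, ← Finset.prod_mul_distrib]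
    exact Finset.prod_congr rfl fun v _ => stepFactor_rev hlam hm hσ hσ' hnz hnz' v

end PGDAux4
section PGDAux5

variable {V : Type*} [Fintype V] [DecidableEq V]
variable {G : SimpleGraph V} [DecidableRel G.Adj] {lam : V → ℝ} {q : Finset V → ℝ}

lemma pgdP_rev_unnorm (hlam : ∀ v, 0 < lam v) (hqsupp : ∀ m, ¬ IsInd G m → q m = 0)
    {σ σ' : Finset V} (hσ : IsInd G σ) (hσ' : IsInd G σ') :
    (∏ v ∈ σ, lam v) * pgdP G lam q σ σ' = (∏ v ∈ σ', lam v) * pgdP G lam q σ' σ := by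
  unfold pgdP
  rw [Finset.mul_sum, Finset.mul_sum]
  apply Finset.sum_congr rfl
  intro m _
  by_cases hq : q m = 0
  · rw [hq]; ring
  · have hm : IsInd G m := by by_contra h; exact hq (hqsupp m h)
    rw [mul_left_comm, mul_left_comm (∏ v ∈ σ', lam v), rev_per_m hlam hm hσ hσ']

lemma partition_pos (hlam : ∀ v, 0 < lam v) :
    0 < ∑ s ∈ Finset.univ.filter (fun s => IsInd G s), ∏ v ∈ s, lam v := by
  apply Finset.sum_pos'
  · intro s _
    exact Finset.prod_nonneg fun v _ => (hlam v).le
  · refine ⟨∅, Finset.mem_filter.mpr ⟨Finset.mem_univ _, ?_⟩, by simp⟩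
    intro v hv
    simp at hv

lemma prodForm_pos (hlam : ∀ v, 0 < lam v) {σ : Finset V} (hσ : IsInd G σ) :
    0 < prodForm G lam σ := by
  unfold prodForm
  rw [if_pos hσ]
  exact div_pos (Finset.prod_pos fun v _ => hlam v) (partition_pos hlam)

lemma prodForm_sum (hlam : ∀ v, 0 < lam v) :
    ∑ σ : Finset V, prodForm G lam σ = 1 := by
  unfold prodForm
  rw [← Finset.sum_filter, ← Finset.sum_div]
  exact div_self (partition_pos (G := G) hlam).ne'

lemma prodForm_rev (hlam : ∀ v, 0 < lam v) (hqsupp : ∀ m, ¬ IsInd G m → q m = 0)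
    {σ σ' : Finset V} (hσ : IsInd G σ) (hσ' : IsInd G σ') :
    prodForm G lam σ * pgdP G lam q σ σ' = prodForm G lam σ' * pgdP G lam q σ' σ := by
  unfold prodForm
  rw [if_pos hσ, if_pos hσ', div_mul_eq_mul_div, div_mul_eq_mul_div,
    pgdP_rev_unnorm hlam hqsupp hσ hσ']

lemma prodForm_stationary (hlam : ∀ v, 0 < lam v) (hqsupp : ∀ m, ¬ IsInd G m → q m = 0)
    (hqsum : ∑ m : Finset V, q m = 1) (σ' : Finset V) :
    ∑ σ : Finset V, prodForm G lam σ * pgdP G lam q σ σ' = prodForm G lam σ' := by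
  by_cases hσ' : IsInd G σ'
  · have key : ∀ σ : Finset V,
        prodForm G lam σ * pgdP G lam q σ σ' = prodForm G lam σ' * pgdP G lam q σ' σ := by
      intro σ
      by_cases hσ : IsInd G σ
      · exact prodForm_rev hlam hqsupp hσ hσ'
      · rw [pgdP_support hqsupp hσ' hσ, show prodForm G lam σ = 0 from if_neg hσ]
        ring
    calc ∑ σ : Finset V, prodForm G lam σ * pgdP G lam q σ σ'
        = ∑ σ : Finset V, prodForm G lam σ' * pgdP G lam q σ' σ :=
          Finset.sum_congr rfl fun σ _ => key σ
      _ = prodForm G lam σ' * ∑ σ : Finset V, pgdP G lam q σ' σ := (Finset.mul_sum _ _ _).symm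
      _ = prodForm G lam σ' := by rw [pgdP_rowsum hlam hqsum, mul_one]
  · rw [show prodForm G lam σ' = 0 from if_neg hσ']
    apply Finset.sum_eq_zero
    intro σ _
    by_cases hσ : IsInd G σ
    · rw [pgdP_support hqsupp hσ hσ', mul_zero]
    · rw [show prodForm G lam σ = 0 from if_neg hσ, zero_mul]

end PGDAux5
section PGDAux6

variable {V : Type*} [Fintype V] [DecidableEq V]
variable {G : SimpleGraph V} [DecidableRel G.Adj] {lam : V → ℝ} {q : Finset V → ℝ}

lemma mul_pos_split {a b : ℝ} (ha : 0 ≤ a) (h : 0 < a * b) : 0 < a ∧ 0 < b := by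
  rcases mul_pos_iff.mp h with ⟨h1, h2⟩ | ⟨h1, h2⟩
  · exact ⟨h1, h2⟩
  · exact absurd h1 (not_lt.mpr ha)

lemma exists_pos_term {ι : Type*} {s : Finset ι} {f : ι → ℝ} (h : 0 < ∑ i ∈ s, f i) :
    ∃ i ∈ s, 0 < f i := by
  obtain ⟨i, hi⟩ := Finset.exists_lt_of_sum_lt (f := fun _ => (0:ℝ)) (g := f) (by simpa using h)
  exact ⟨i, hi.1, hi.2⟩

lemma qVert_exists (hq0 : ∀ m, 0 ≤ q m) {v : V} (h : 0 < qVert q v) :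
    ∃ m, v ∈ m ∧ 0 < q m := by
  obtain ⟨m, hm, hq⟩ := exists_pos_term h
  exact ⟨m, (Finset.mem_filter.mp hm).2, hq⟩

lemma qVert_zero (hq0 : ∀ m, 0 ≤ q m) {v : V} (h : ¬ 0 < qVert q v) :
    ∀ m, v ∈ m → q m = 0 := by
  have hz : qVert q v = 0 := le_antisymm (not_lt.mp h)
    (Finset.sum_nonneg fun m _ => hq0 m)
  intro m hm
  exact (Finset.sum_eq_zero_iff_of_nonneg (fun m _ => hq0 m)).mp hz m
    (Finset.mem_filter.mpr ⟨Finset.mem_univ _, hm⟩)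

lemma chainPow_freeze (hlam : ∀ v, 0 < lam v) (hq0 : ∀ m, 0 ≤ q m)
    {v : V} (hv : ∀ m, v ∈ m → q m = 0) :
    ∀ (t : ℕ) (σ σ' : Finset V), 0 < chainPow (pgdP G lam q) t σ σ' → (v ∈ σ' ↔ v ∈ σ) := by
  intro t
  induction t with
  | zero =>
      intro σ σ' hp
      unfold chainPow at hp
      by_cases he : σ = σ'
      · subst he; exact Iff.rfl
      · rw [if_neg he] at hp; exact absurd hp (lt_irrefl 0)
  | succ t ih =>
      intro σ σ' hp
      unfold chainPow at hp
      obtain ⟨z, -, hz⟩ := exists_pos_term hp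
      obtain ⟨h1, h2⟩ := mul_pos_split (chainPow_nonneg' (pgdP_nonneg hlam hq0) t σ z) hz
      have hiff1 : v ∈ z ↔ v ∈ σ := ih σ z h1
      have hiff2 : v ∈ σ' ↔ v ∈ z := by
        by_contra hd
        rw [pgdP_freeze hv hd] at h2
        exact absurd h2 (lt_irrefl 0)
      exact hiff2.trans hiff1

lemma IsInd.subset {s t : Finset V} (h : s ⊆ t) (ht : IsInd G t) : IsInd G s :=
  fun v hv w hw => ht v (h hv) w (h hw)

lemma reach_empty (hlam : ∀ v, 0 < lam v) (hq0 : ∀ m, 0 ≤ q m)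
    (hqv : ∀ v, ∃ m, v ∈ m ∧ 0 < q m) :
    ∀ (n : ℕ) (s : Finset V), s.card = n → IsInd G s →
      0 < chainPow (pgdP G lam q) n s ∅ := by
  intro n
  induction n with
  | zero =>
      intro s hs _
      rw [Finset.card_eq_zero] at hs
      subst hs
      simp [chainPow]
  | succ n ih =>
      intro s hs hind
      obtain ⟨v, hv⟩ := Finset.card_pos.mp (by rw [hs]; exact n.succ_pos)
      obtain ⟨m0, hvm, hm0⟩ := hqv v
      have h1 : 0 < chainPow (pgdP G lam q) 1 s (s.erase v) := by
        rw [chainPow_one]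
        exact pgdP_erase_pos hlam hq0 hind hv hvm hm0
      have h2 : 0 < chainPow (pgdP G lam q) n (s.erase v) ∅ := by
        apply ih
        · rw [Finset.card_erase_of_mem hv, hs]; rfl
        · exact IsInd.subset (Finset.erase_subset v s) hind
      have := chainPow_trans_pos (pgdP_nonneg hlam hq0) h1 h2
      rwa [Nat.add_comm] at this

lemma reach_from_empty (hlam : ∀ v, 0 < lam v) (hq0 : ∀ m, 0 ≤ q m)
    (hqv : ∀ v, ∃ m, v ∈ m ∧ 0 < q m) :
    ∀ (n : ℕ) (s : Finset V), s.card = n → IsInd G s →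
      0 < chainPow (pgdP G lam q) n ∅ s := by
  intro n
  induction n with
  | zero =>
      intro s hs _
      rw [Finset.card_eq_zero] at hs
      subst hs
      simp [chainPow]
  | succ n ih =>
      intro s hs hind
      obtain ⟨v, hv⟩ := Finset.card_pos.mp (by rw [hs]; exact n.succ_pos)
      obtain ⟨m0, hvm, hm0⟩ := hqv v
      have hetoS : 0 < chainPow (pgdP G lam q) 1 (s.erase v) s := by
        rw [chainPow_one]
        have hins : insert v (s.erase v) = s := Finset.insert_erase hv
        have := pgdP_insert_pos hlam hq0 (Finset.notMem_erase v s)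
          (by rw [hins]; exact hind) hvm hm0
        rwa [hins] at this
      have h2 : 0 < chainPow (pgdP G lam q) n ∅ (s.erase v) := by
        apply ih
        · rw [Finset.card_erase_of_mem hv, hs]; rfl
        · exact IsInd.subset (Finset.erase_subset v s) hind
      exact chainPow_trans_pos (pgdP_nonneg hlam hq0) h2 hetoS

lemma pgd_irred (hlam : ∀ v, 0 < lam v) (hq0 : ∀ m, 0 ≤ q m)
    (hm0 : ∃ m, 0 < q m) (hqv : ∀ v, ∃ m, v ∈ m ∧ 0 < q m) :
    ChainIrreducible (pgdP G lam q) {σ | IsInd G σ} := by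
  intro x hx y hy
  obtain ⟨m0, hm0'⟩ := hm0
  have hempty : IsInd G (∅ : Finset V) := fun a ha => absurd ha (Finset.notMem_empty a)
  have h1 : 0 < chainPow (pgdP G lam q) x.card x ∅ :=
    reach_empty hlam hq0 hqv x.card x rfl hx
  have h2 : 0 < chainPow (pgdP G lam q) 1 ∅ ∅ := by
    rw [chainPow_one]
    exact pgdP_self_pos hlam hq0 hempty hm0'
  have h3 : 0 < chainPow (pgdP G lam q) y.card ∅ y :=
    reach_from_empty hlam hq0 hqv y.card y rfl hy
  exact ⟨x.card + 1 + y.card, by omega,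
    chainPow_trans_pos (pgdP_nonneg hlam hq0)
      (chainPow_trans_pos (pgdP_nonneg hlam hq0) h1 h2) h3⟩

end PGDAux6

/-- Theorem 1 of the paper: the parallel Glauber dynamics on the
feasible schedules is irreducible and aperiodic iff `q_v > 0` for every vertex `v`;
in that case it is reversible with respect to the product-form distribution
`π(σ) = Π_{i∈σ} λ_i / Σ_{σ'∈Ω} Π_{i∈σ'} λ_i`, which is its unique stationary
distribution. -/
theorem pgd_irreducible_aperiodic_iff_and_reversible
    {V : Type*} [Fintype V] [DecidableEq V]
    (G : SimpleGraph V) [DecidableRel G.Adj]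
    (lam : V → ℝ) (hlam : ∀ v, 0 < lam v)
    (q : Finset V → ℝ)
    (hq0 : ∀ m, 0 ≤ q m)
    (hqsupp : ∀ m, ¬ IsInd G m → q m = 0)
    (hqsum : ∑ m : Finset V, q m = 1) :
    ((ChainIrreducible (pgdP G lam q) {σ | IsInd G σ} ∧
        ChainAperiodic (pgdP G lam q) {σ | IsInd G σ}) ↔
      ∀ v : V, 0 < qVert q v) ∧
    ((∀ v : V, 0 < qVert q v) →
      -- reversibility with respect to the product-form distribution
      (∀ σ σ' : Finset V, IsInd G σ → IsInd G σ' →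
        prodForm G lam σ * pgdP G lam q σ σ' =
          prodForm G lam σ' * pgdP G lam q σ' σ) ∧
      -- `π` is a stationary distribution
      (∀ σ' : Finset V, ∑ σ : Finset V, prodForm G lam σ * pgdP G lam q σ σ' =
        prodForm G lam σ') ∧
      -- and it is the unique stationary distribution
      (∀ μ : Finset V → ℝ,
        (∀ σ, 0 ≤ μ σ) →
        (∀ σ, ¬ IsInd G σ → μ σ = 0) →
        (∑ σ : Finset V, μ σ) = 1 →
        (∀ σ' : Finset V, ∑ σ : Finset V, μ σ * pgdP G lam q σ σ' = μ σ') →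
        μ = prodForm G lam)) := by
  have hPnn : ∀ σ σ' : Finset V, 0 ≤ pgdP G lam q σ σ' := pgdP_nonneg hlam hq0
  have hm0 : ∃ m, 0 < q m := by
    by_contra hc
    push_neg at hc
    have hz : ∑ m : Finset V, q m = 0 :=
      Finset.sum_eq_zero fun m _ => le_antisymm (hc m) (hq0 m)
    rw [hqsum] at hz
    norm_num at hz
  have hempty : IsInd G (∅ : Finset V) := fun a ha => absurd ha (Finset.notMem_empty a)
  constructor
  · constructor
    · rintro ⟨hirr, -⟩ v
      by_contra hv
      have hv0 : ∀ m, v ∈ m → q m = 0 := qVert_zero hq0 hv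
      have hind1 : IsInd G ({v} : Finset V) := by
        intro a ha b hb
        rw [Finset.mem_singleton] at ha hb
        subst ha; subst hb
        exact fun h => G.irrefl h
      obtain ⟨t, -, hpos⟩ := hirr ∅ hempty {v} hind1
      have := chainPow_freeze hlam hq0 hv0 t ∅ {v} hpos
      simp at this
    · intro hqv
      have hqv' : ∀ v, ∃ m, v ∈ m ∧ 0 < q m := fun v => qVert_exists hq0 (hqv v)
      refine ⟨pgd_irred (G := G) hlam hq0 hm0 hqv', ?_⟩
      intro x hx d hd
      obtain ⟨m0, hm0'⟩ := hm0
      have h1 : 0 < chainPow (pgdP G lam q) 1 x x := by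
        rw [chainPow_one]
        exact pgdP_self_pos hlam hq0 hx hm0'
      exact Nat.dvd_one.mp (hd 1 one_pos h1)
  · intro hqv
    have hqv' : ∀ v, ∃ m, v ∈ m ∧ 0 < q m := fun v => qVert_exists hq0 (hqv v)
    have hirr := pgd_irred (G := G) hlam hq0 hm0 hqv'
    refine ⟨fun σ σ' hσ hσ' => prodForm_rev hlam hqsupp hσ hσ',
      prodForm_stationary hlam hqsupp hqsum, ?_⟩
    intro μ hμ0 hμsupp hμsum hμstat
    have hπpos : ∀ σ : Finset V, IsInd G σ → 0 < prodForm G lam σ :=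
      fun σ h => prodForm_pos hlam h
    set h : Finset V → ℝ := fun σ => μ σ / prodForm G lam σ with hh
    have hμeq : ∀ σ, IsInd G σ → μ σ = h σ * prodForm G lam σ := by
      intro σ hσ
      rw [hh]
      exact (div_mul_cancel₀ (μ σ) (hπpos σ hσ).ne').symm
    have hharm : ∀ σ', IsInd G σ' →
        μ σ' = prodForm G lam σ' * ∑ σ : Finset V, pgdP G lam q σ' σ * h σ := by
      intro σ' hσ'
      calc μ σ' = ∑ σ : Finset V, μ σ * pgdP G lam q σ σ' := (hμstat σ').symm
        _ = ∑ σ : Finset V, prodForm G lam σ' * (pgdP G lam q σ' σ * h σ) := by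
            apply Finset.sum_congr rfl
            intro σ _
            by_cases hσ : IsInd G σ
            · have hr := prodForm_rev hlam hqsupp hσ hσ'
              calc μ σ * pgdP G lam q σ σ'
                  = h σ * (prodForm G lam σ * pgdP G lam q σ σ') := by
                    rw [hμeq σ hσ]; ring
                _ = h σ * (prodForm G lam σ' * pgdP G lam q σ' σ) := by rw [hr]
                _ = prodForm G lam σ' * (pgdP G lam q σ' σ * h σ) := by ring
            · rw [hμsupp σ hσ, pgdP_support hqsupp hσ' hσ]
              ring
        _ = prodForm G lam σ' * ∑ σ : Finset V, pgdP G lam q σ' σ * h σ :=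
            (Finset.mul_sum _ _ _).symm
    have hne : (Finset.univ.filter (fun s : Finset V => IsInd G s)).Nonempty :=
      ⟨∅, Finset.mem_filter.mpr ⟨Finset.mem_univ _, hempty⟩⟩
    obtain ⟨x, hxmem, hxmax⟩ := Finset.exists_max_image _ h hne
    have hxind : IsInd G x := (Finset.mem_filter.mp hxmem).2
    have hmax : ∀ σ, IsInd G σ → h σ ≤ h x := fun σ hσ =>
      hxmax σ (Finset.mem_filter.mpr ⟨Finset.mem_univ _, hσ⟩)
    have hHat : ∀ y, IsInd G y → h y = h x →
        ∀ z, 0 < pgdP G lam q y z → IsInd G z ∧ h z = h x := by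
      intro y hy hyM z hz
      have hzind : IsInd G z := by
        by_contra hc
        rw [pgdP_support hqsupp hy hc] at hz
        exact absurd hz (lt_irrefl 0)
      refine ⟨hzind, ?_⟩
      have e1 : prodForm G lam y * (∑ σ : Finset V, pgdP G lam q y σ * h σ) =
          prodForm G lam y * h x := by
        rw [← hharm y hy, hμeq y hy, hyM]; ring
      have e1' : ∑ σ : Finset V, pgdP G lam q y σ * h σ = h x :=
        mul_left_cancel₀ (hπpos y hy).ne' e1
      have e2 : ∑ σ : Finset V, pgdP G lam q y σ * h x = h x := by
        rw [← Finset.sum_mul, pgdP_rowsum hlam hqsum, one_mul]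
      have hsum0 : ∑ σ : Finset V, pgdP G lam q y σ * (h x - h σ) = 0 := by
        calc ∑ σ : Finset V, pgdP G lam q y σ * (h x - h σ)
            = (∑ σ : Finset V, pgdP G lam q y σ * h x) -
                ∑ σ : Finset V, pgdP G lam q y σ * h σ := by
              rw [← Finset.sum_sub_distrib]
              exact Finset.sum_congr rfl fun σ _ => by ring
          _ = 0 := by rw [e1', e2, sub_self]
      have hterm : ∀ σ ∈ (Finset.univ : Finset (Finset V)),
          0 ≤ pgdP G lam q y σ * (h x - h σ) := by
        intro σ _
        by_cases hσ : IsInd G σ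
        · exact mul_nonneg (hPnn y σ) (sub_nonneg.mpr (hmax σ hσ))
        · rw [pgdP_support hqsupp hy hσ, zero_mul]
      have hz0 := (Finset.sum_eq_zero_iff_of_nonneg hterm).mp hsum0 z (Finset.mem_univ z)
      rcases mul_eq_zero.mp hz0 with hcz | hcz
      · exact absurd hcz hz.ne'
      · linarith
    have hreach : ∀ (t : ℕ) (y : Finset V),
        0 < chainPow (pgdP G lam q) t x y → IsInd G y ∧ h y = h x := by
      intro t
      induction t with
      | zero =>
          intro y hy
          unfold chainPow at hy
          by_cases hxy : x = y
          · subst hxy; exact ⟨hxind, rfl⟩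
          · rw [if_neg hxy] at hy; exact absurd hy (lt_irrefl 0)
      | succ t ih =>
          intro y hy
          unfold chainPow at hy
          obtain ⟨z, -, hzt⟩ := exists_pos_term hy
          obtain ⟨h1, h2⟩ := mul_pos_split (chainPow_nonneg' hPnn t x z) hzt
          obtain ⟨hzind, hzM⟩ := ih z h1
          exact hHat z hzind hzM y h2
    have hconst : ∀ σ, IsInd G σ → h σ = h x := by
      intro σ hσ
      obtain ⟨t, -, hpos⟩ := hirr x hxind σ hσ
      exact (hreach t σ hpos).2
    have hall : ∀ σ, μ σ = h x * prodForm G lam σ := by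
      intro σ
      by_cases hσ : IsInd G σ
      · rw [hμeq σ hσ, hconst σ hσ]
      · rw [hμsupp σ hσ, show prodForm G lam σ = 0 from if_neg hσ, mul_zero]
    have hM1 : h x = 1 := by
      have e : (1:ℝ) = h x * 1 := by
        calc (1:ℝ) = ∑ σ : Finset V, μ σ := hμsum.symm
          _ = ∑ σ : Finset V, h x * prodForm G lam σ :=
              Finset.sum_congr rfl fun σ _ => hall σ
          _ = h x * ∑ σ : Finset V, prodForm G lam σ := (Finset.mul_sum _ _ _).symm
          _ = h x * 1 := by rw [prodForm_sum hlam]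
      linarith
    funext σ
    rw [hall σ, hM1, one_mul]
end

section
/- Suppose q_v > 0 for all v. Let m = min_{v∈V} (1+λ_v)/q_v, M = max_{v∈V} (1+λ_v)/q_v, and ξ = M/m. If θ := min_{v∈V} { 1 + λ_v − Σ_{w∈N_v} λ_w } > 0, then the mixing time of the parallel Glauber dynamics satisfies T_mix ≤ ⌈(M/θ) log(nξe)⌉. -/
open Finset

variable {V : Type*} [Fintype V] [DecidableEq V]

/-!
Path coupling with a weighted Hamming metric. Run two copies of the parallel Glauber dynamics
with the same decision schedule and the same coins, a coin of `v` showing `true` with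
probability `λ_v / (1 + λ_v)`. A vertex then ends up in different states only if it was a
disagreement and is not scheduled, or it is scheduled, its coin shows `true` and exactly one
copy has an active neighbour, which needs a neighbouring disagreement. With the weights
`w_v = (1 + λ_v) / q_v`, chosen so that `q_v w_v = 1 + λ_v`, the expected weighted distance
after one step from `(σ, τ)`, where `d(σ, τ) = ∑_{v ∈ σ ∆ τ} w_v`, is at most
`∑_{v ∈ σ ∆ τ} (w_v - (1 + λ_v - ∑_{u ∼ v} λ_u)) ≤ (1 - θ / M) d(σ, τ)`.
Couple the chain started at `x` with the chain started from the (reversible) product form: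
the total variation distance at time `t` is at most the probability that the two copies differ,
hence at most `E d / m ≤ (1 - θ / M) ^ t n M / m ≤ exp (-t θ / M) n ξ`.
-/

lemma Fintype.sum_comm_pairs {α β γ δ M : Type*} [Fintype α] [Fintype β] [Fintype γ] [Fintype δ]
    [AddCommMonoid M] (f : α → β → γ → δ → M) :
    ∑ a, ∑ b, ∑ c, ∑ d, f a b c d = ∑ c, ∑ d, ∑ a, ∑ b, f a b c d := by
  simpa only [Fintype.sum_prod_type] using
    sum_comm (s := univ) (t := univ) (f := fun (p : α × β) (r : γ × δ) => f p.1 p.2 r.1 r.2)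

lemma Fintype.sum_prod_mul_apply {ι β : Type*} [Fintype ι] [DecidableEq ι] [Fintype β]
    (p : ι → β → ℝ) (hp : ∀ j, ∑ b, p j b = 1) (i : ι) (f : β → ℝ) :
    ∑ c : ι → β, (∏ j, p j (c j)) * f (c i) = ∑ b, p i b * f b := by
  have hsplit : ∀ c : ι → β, (∏ j, p j (c j)) * f (c i)
      = ∏ j, p j (c j) * (if j = i then f (c j) else 1) := fun c => by
    rw [prod_mul_distrib, Fintype.prod_ite_eq']
  simp only [hsplit]
  rw [← Fintype.prod_sum (fun j b => p j b * if j = i then f b else 1),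
    Fintype.prod_eq_single i fun j hj => by simp [hj, hp j]]
  simp

lemma Fintype.sum_prod_eq_one {ι β : Type*} [Fintype ι] [DecidableEq ι] [Fintype β]
    (p : ι → β → ℝ) (hp : ∀ j, ∑ b, p j b = 1) : ∑ c : ι → β, ∏ j, p j (c j) = 1 := by
  simp [← Fintype.prod_sum, hp]

section MarkovCoupling

variable {S : Type*} [Fintype S]

structure IsStationaryDist (P : S → S → ℝ) (π : S → ℝ) : Prop where
  nonneg : ∀ s, 0 ≤ π s
  sum_eq_one : ∑ s, π s = 1
  sum_mul : ∀ s', ∑ s, π s * P s s' = π s'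

structure IsMarkovCoupling (P : S → S → ℝ) (K : S → S → S → S → ℝ) : Prop where
  nonneg : ∀ σ τ σ' τ', 0 ≤ K σ τ σ' τ'
  sum_snd : ∀ σ τ σ', ∑ τ', K σ τ σ' τ' = P σ σ'
  sum_fst : ∀ σ τ τ', ∑ σ', K σ τ σ' τ' = P τ τ'

lemma IsStationaryDist.of_detailedBalance {P : S → S → ℝ} {π : S → ℝ}
    (hπ0 : ∀ s, 0 ≤ π s) (hπ1 : ∑ s, π s = 1) (hP : ∀ s, ∑ s', P s s' = 1)
    (hdb : ∀ s s', π s * P s s' = π s' * P s' s) : IsStationaryDist P π where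
  nonneg := hπ0
  sum_eq_one := hπ1
  sum_mul s' := by simp only [hdb _ s', ← mul_sum, hP, mul_one]

variable [DecidableEq S]

noncomputable def coupledDist (K : S → S → S → S → ℝ) (x : S) (π : S → ℝ) :
    ℕ → S → S → ℝ
  | 0 => fun σ τ => (if σ = x then 1 else 0) * π τ
  | t + 1 => fun σ' τ' => ∑ σ, ∑ τ, coupledDist K x π t σ τ * K σ τ σ' τ'

variable {P : S → S → ℝ} {K : S → S → S → S → ℝ} {π : S → ℝ}

lemma coupledDist_nonneg (hK : ∀ σ τ σ' τ', 0 ≤ K σ τ σ' τ') (hπ : ∀ s, 0 ≤ π s) (x : S) :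
    ∀ t σ τ, 0 ≤ coupledDist K x π t σ τ
  | 0, σ, τ => mul_nonneg (by split_ifs <;> norm_num) (hπ τ)
  | t + 1, _, _ => sum_nonneg fun σ _ => sum_nonneg fun τ _ =>
      mul_nonneg (coupledDist_nonneg hK hπ x t σ τ) (hK ..)

lemma sum_coupledDist_snd (hK : IsMarkovCoupling P K) (hπ : ∑ s, π s = 1) (x : S) :
    ∀ t σ, ∑ τ, coupledDist K x π t σ τ = chainDist P x t σ
  | 0, σ => by simp only [coupledDist, chainDist, ← mul_sum, hπ, mul_one]
  | t + 1, σ' => by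
    simp only [coupledDist, chainDist]
    rw [sum_comm]
    refine sum_congr rfl fun σ _ => ?_
    rw [sum_comm]
    simp only [← mul_sum, hK.sum_snd, ← sum_mul, sum_coupledDist_snd hK hπ x t σ]

lemma sum_coupledDist_fst (hK : IsMarkovCoupling P K) (hπ : ∀ s', ∑ s, π s * P s s' = π s')
    (x : S) : ∀ t τ, ∑ σ, coupledDist K x π t σ τ = π τ
  | 0, τ => by simp [coupledDist]
  | t + 1, τ' => calc
    _ = ∑ σ, ∑ τ, coupledDist K x π t σ τ * P τ τ' := by
      simp only [coupledDist]
      rw [sum_comm]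
      refine sum_congr rfl fun σ _ => ?_
      rw [sum_comm]
      simp only [← mul_sum, hK.sum_fst]
    _ = π τ' := by
      rw [sum_comm]
      simp only [← sum_mul, sum_coupledDist_fst hK hπ x t, hπ]

lemma sum_coupledDist_mul_le (hK : ∀ σ τ σ' τ', 0 ≤ K σ τ σ' τ') (hπ : IsStationaryDist P π)
    (d : S → S → ℝ) {γ D : ℝ} (hγ : 0 ≤ γ) (hdD : ∀ σ τ, d σ τ ≤ D)
    (hcontr : ∀ σ τ, ∑ σ', ∑ τ', K σ τ σ' τ' * d σ' τ' ≤ γ * d σ τ) (x : S) :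
    ∀ t, ∑ σ, ∑ τ, coupledDist K x π t σ τ * d σ τ ≤ γ ^ t * D
  | 0 => calc
    _ = ∑ τ, π τ * d x τ := by simp [coupledDist]
    _ ≤ ∑ τ, π τ * D := sum_le_sum fun τ _ => mul_le_mul_of_nonneg_left (hdD x τ) (hπ.nonneg τ)
    _ = γ ^ 0 * D := by rw [← sum_mul, hπ.sum_eq_one, pow_zero]
  | t + 1 => calc
    _ = ∑ σ, ∑ τ, coupledDist K x π t σ τ * ∑ σ', ∑ τ', K σ τ σ' τ' * d σ' τ' := by
      simp only [coupledDist, sum_mul, mul_sum, mul_assoc]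
      exact Fintype.sum_comm_pairs _
    _ ≤ ∑ σ, ∑ τ, coupledDist K x π t σ τ * (γ * d σ τ) :=
      sum_le_sum fun σ _ => sum_le_sum fun τ _ => mul_le_mul_of_nonneg_left (hcontr σ τ)
        (coupledDist_nonneg hK hπ.nonneg x t σ τ)
    _ = γ * ∑ σ, ∑ τ, coupledDist K x π t σ τ * d σ τ := by
      simp only [mul_sum]
      exact sum_congr rfl fun _ _ => sum_congr rfl fun _ _ => by ring
    _ ≤ γ * (γ ^ t * D) :=
      mul_le_mul_of_nonneg_left (sum_coupledDist_mul_le hK hπ d hγ hdD hcontr x t) hγ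
    _ = γ ^ (t + 1) * D := by ring

lemma tvDist_le_sum_of_marginals {μ ν : S → ℝ} (ρ : S → S → ℝ) (hρ : ∀ σ τ, 0 ≤ ρ σ τ)
    (hμ : ∀ σ, ∑ τ, ρ σ τ = μ σ) (hν : ∀ τ, ∑ σ, ρ σ τ = ν τ) :
    tvDist μ ν ≤ ∑ σ, ∑ τ, if σ = τ then 0 else ρ σ τ := by
  have hpoint : ∀ s,
      |μ s - ν s| ≤ ∑ τ, ((if s = τ then 0 else ρ s τ) + if τ = s then 0 else ρ τ s) := by
    intro s
    rw [← hμ, ← hν, ← sum_sub_distrib]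
    refine (abs_sum_le_sum_abs _ _).trans (sum_le_sum fun τ _ => ?_)
    by_cases h : s = τ
    · simp [h]
    · simp only [h, Ne.symm h, if_false]
      exact abs_sub_le_iff.2 ⟨by linarith [hρ τ s], by linarith [hρ s τ]⟩
  calc tvDist μ ν ≤ 1 / 2 * ∑ s, ∑ τ, ((if s = τ then 0 else ρ s τ) + if τ = s then 0 else ρ τ s) :=
        mul_le_mul_of_nonneg_left (sum_le_sum fun s _ => hpoint s) (by norm_num)
    _ = ∑ σ, ∑ τ, if σ = τ then 0 else ρ σ τ := by
        simp only [sum_add_distrib]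
        rw [sum_comm (f := fun s τ => if τ = s then 0 else ρ τ s)]
        ring

theorem tvDist_chainDist_le_of_contraction (hK : IsMarkovCoupling P K) (hπ : IsStationaryDist P π)
    (d : S → S → ℝ) {γ δ D : ℝ} (hγ : 0 ≤ γ) (hδ : 0 < δ) (hd0 : ∀ σ τ, 0 ≤ d σ τ)
    (hdδ : ∀ σ τ, σ ≠ τ → δ ≤ d σ τ) (hdD : ∀ σ τ, d σ τ ≤ D)
    (hcontr : ∀ σ τ, ∑ σ', ∑ τ', K σ τ σ' τ' * d σ' τ' ≤ γ * d σ τ) (x : S) (t : ℕ) :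
    tvDist (chainDist P x t) π ≤ γ ^ t * D / δ := by
  have hρ := coupledDist_nonneg hK.nonneg hπ.nonneg x t
  calc tvDist (chainDist P x t) π
      ≤ ∑ σ, ∑ τ, if σ = τ then 0 else coupledDist K x π t σ τ :=
        tvDist_le_sum_of_marginals _ hρ (sum_coupledDist_snd hK hπ.sum_eq_one x t)
          (sum_coupledDist_fst hK hπ.sum_mul x t)
    _ ≤ ∑ σ, ∑ τ, coupledDist K x π t σ τ * d σ τ / δ := by
        refine sum_le_sum fun σ _ => sum_le_sum fun τ _ => ?_
        split_ifs with h
        · exact div_nonneg (mul_nonneg (hρ σ τ) (hd0 σ τ)) hδ.le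
        · rw [le_div_iff₀ hδ]
          exact mul_le_mul_of_nonneg_left (hdδ σ τ h) (hρ σ τ)
    _ ≤ γ ^ t * D / δ := by
        simp only [← sum_div]
        gcongr
        exact sum_coupledDist_mul_le hK.nonneg hπ d hγ hdD hcontr x t

end MarkovCoupling

lemma one_sub_pow_mul_le_inv_exp_one {a c : ℝ} {N : ℕ} (ha : 0 < a) (ha1 : a ≤ 1) (hc : 0 < c)
    (hN : a⁻¹ * Real.log (c * Real.exp 1) ≤ N) : (1 - a) ^ N * c ≤ 1 / Real.exp 1 := by
  have hlog : Real.log (c * Real.exp 1) ≤ N * a := by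
    rwa [inv_mul_le_iff₀ ha, mul_comm (a : ℝ)] at hN
  have hpow : (1 - a) ^ N ≤ (c * Real.exp 1)⁻¹ := calc
    (1 - a) ^ N ≤ Real.exp (-a) ^ N :=
      pow_le_pow_left₀ (by linarith) (by linarith [Real.add_one_le_exp (-a)]) N
    _ = Real.exp (-(N * a)) := by rw [← Real.exp_nat_mul, mul_neg]
    _ ≤ Real.exp (-Real.log (c * Real.exp 1)) := Real.exp_le_exp.2 (neg_le_neg hlog)
    _ = (c * Real.exp 1)⁻¹ := by rw [Real.exp_neg, Real.exp_log (by positivity)]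
  calc (1 - a) ^ N * c ≤ (c * Real.exp 1)⁻¹ * c := mul_le_mul_of_nonneg_right hpow hc.le
    _ = 1 / Real.exp 1 := by field_simp

lemma mixTime_le {S : Type*} [Fintype S] [DecidableEq S] {P : S → S → ℝ} {π : S → ℝ}
    {states : Finset S} {N : ℕ} (h : ∀ x ∈ states, tvDist (chainDist P x N) π ≤ 1 / Real.exp 1) :
    mixTime P π states ≤ N :=
  Finset.sup_le fun x hx => Nat.sInf_le (h x hx)

lemma SimpleGraph.sum_le_sum_sum_neighborFinset {W : Type*} [Fintype W] (G : SimpleGraph W)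
    [DecidableRel G.Adj] {A B : Finset W} {f : W → ℝ} (hf : ∀ v, 0 ≤ f v)
    (hB : ∀ v ∈ B, ∃ u ∈ A, G.Adj u v) :
    ∑ v ∈ B, f v ≤ ∑ u ∈ A, ∑ v ∈ G.neighborFinset u, f v := by
  have hind : ∀ u v, 0 ≤ if G.Adj u v then f v else 0 := fun u v => by
    split_ifs
    exacts [hf v, le_rfl]
  calc ∑ v ∈ B, f v ≤ ∑ v ∈ B, ∑ u ∈ A, if G.Adj u v then f v else 0 :=
        sum_le_sum fun v hv => by
          obtain ⟨u, hu, huv⟩ := hB v hv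
          simpa [huv] using single_le_sum (fun u _ => hind u v) hu
    _ ≤ ∑ v, ∑ u ∈ A, if G.Adj u v then f v else 0 :=
        sum_le_sum_of_subset_of_nonneg (subset_univ B) fun v _ _ => sum_nonneg fun u _ => hind u v
    _ = ∑ u ∈ A, ∑ v ∈ G.neighborFinset u, f v := by
        rw [sum_comm]
        simp [SimpleGraph.neighborFinset_eq_filter, sum_filter]

section WeightedHamming

variable {α : Type*} [DecidableEq α] {w : α → ℝ}

noncomputable def weightedHamming (w : α → ℝ) (σ τ : Finset α) : ℝ := ∑ a ∈ symmDiff σ τ, w a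

lemma Finset.sum_symmDiff_eq_sum_ite [Fintype α] (σ τ : Finset α) (f : α → ℝ) :
    ∑ a ∈ symmDiff σ τ, f a = ∑ a, if a ∈ σ ↔ a ∈ τ then 0 else f a := by
  have : symmDiff σ τ = univ.filter fun a => ¬(a ∈ σ ↔ a ∈ τ) := by
    ext a
    simp only [mem_symmDiff, mem_filter, mem_univ, true_and]
    tauto
  simp only [this, sum_filter, ite_not]

lemma weightedHamming_nonneg (hw : ∀ a, 0 ≤ w a) (σ τ : Finset α) : 0 ≤ weightedHamming w σ τ :=
  sum_nonneg fun a _ => hw a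

lemma le_weightedHamming {δ : ℝ} (hw : ∀ a, δ ≤ w a) (hw0 : ∀ a, 0 ≤ w a) {σ τ : Finset α}
    (h : σ ≠ τ) : δ ≤ weightedHamming w σ τ := by
  obtain ⟨a, ha⟩ := symmDiff_nonempty.2 h
  exact (hw a).trans (single_le_sum (fun b _ => hw0 b) ha)

lemma weightedHamming_le [Fintype α] {M : ℝ} (hw0 : ∀ a, 0 ≤ w a) (hwM : ∀ a, w a ≤ M)
    (σ τ : Finset α) : weightedHamming w σ τ ≤ Fintype.card α * M := calc
  weightedHamming w σ τ ≤ ∑ a, w a :=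
    sum_le_sum_of_subset_of_nonneg (subset_univ _) fun a _ _ => hw0 a
  _ ≤ Fintype.card α * M := by
    simpa using sum_le_card_nsmul univ w M fun a _ => hwM a

end WeightedHamming

section Coin

variable {α : Type*} {lam : α → ℝ}

noncomputable def coinWeight (lam : α → ℝ) (a : α) (b : Bool) : ℝ :=
  if b then lam a / (1 + lam a) else 1 / (1 + lam a)

lemma coinWeight_nonneg (hlam : ∀ a, 0 < lam a) (a : α) (b : Bool) : 0 ≤ coinWeight lam a b := by
  have := hlam a
  unfold coinWeight
  split_ifs <;> positivity

lemma sum_coinWeight (hlam : ∀ a, 0 < lam a) (a : α) : ∑ b, coinWeight lam a b = 1 := by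
  have := hlam a
  simp only [coinWeight, Fintype.sum_bool, if_true, Bool.false_eq_true, if_false]
  rw [← add_div, add_comm, div_self (by positivity)]

noncomputable def coinProb [Fintype α] (lam : α → ℝ) (c : α → Bool) : ℝ :=
  ∏ a, coinWeight lam a (c a)

lemma coinProb_nonneg [Fintype α] (hlam : ∀ a, 0 < lam a) (c : α → Bool) : 0 ≤ coinProb lam c :=
  prod_nonneg fun a _ => coinWeight_nonneg hlam a (c a)

lemma sum_coinProb [Fintype α] [DecidableEq α] (hlam : ∀ a, 0 < lam a) :
    ∑ c, coinProb lam c = 1 :=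
  Fintype.sum_prod_eq_one _ (sum_coinWeight hlam)

lemma sum_coinProb_mul_apply [Fintype α] [DecidableEq α] (hlam : ∀ a, 0 < lam a) (a : α)
    (f : Bool → ℝ) : ∑ c, coinProb lam c * f (c a) = ∑ b, coinWeight lam a b * f b :=
  Fintype.sum_prod_mul_apply _ (sum_coinWeight hlam) a f

end Coin

section VertexUpdate

variable {W : Type*} [DecidableEq W] (G : SimpleGraph W) [DecidableRel G.Adj] {lam : W → ℝ}

/-- One step of the dynamics at `v`, as a function of the decision schedule `m` and of an
independent coin per vertex whose law is `coinWeight` (see `stepFactor_eq_sum_coinWeight`). -/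
def vertexUpdate (σ m : Finset W) (v : W) (b : Bool) : Bool :=
  if v ∈ m then b && !decide (∃ w ∈ σ, G.Adj v w) else decide (v ∈ σ)

lemma stepFactor_eq_sum_coinWeight (hlam : ∀ v, 0 < lam v) (σ m σ' : Finset W) (v : W) :
    stepFactor G lam σ m σ' v
      = ∑ b, coinWeight lam v b * if vertexUpdate G σ m v b = decide (v ∈ σ') then 1 else 0 := by
  have h1 := sum_coinWeight hlam v
  simp only [Fintype.sum_bool, coinWeight, if_true, Bool.false_eq_true, if_false, one_div] at h1
  unfold stepFactor vertexUpdate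
  by_cases hm : v ∈ m <;> by_cases hb : ∃ w ∈ σ, G.Adj v w <;> by_cases hσ : v ∈ σ <;>
    by_cases hσ' : v ∈ σ' <;> simp [hm, hb, hσ, hσ', h1, coinWeight]

lemma weight_mul_stepFactor_comm {σ σ' m : Finset W} {v : W}
    (hσ : v ∈ σ → ¬∃ w ∈ σ, G.Adj v w) (hσ' : v ∈ σ' → ¬∃ w ∈ σ', G.Adj v w)
    (hblk : v ∈ m → ((∃ w ∈ σ, G.Adj v w) ↔ ∃ w ∈ σ', G.Adj v w)) :
    (if v ∈ σ then lam v else 1) * stepFactor G lam σ m σ' v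
      = (if v ∈ σ' then lam v else 1) * stepFactor G lam σ' m σ v := by
  unfold stepFactor
  by_cases hm : v ∈ m
  · have hblk := hblk hm
    by_cases hb : ∃ w ∈ σ, G.Adj v w
    · have hb' := hblk.1 hb
      simp [hm, hb, hb', mt hσ (not_not.2 hb), mt hσ' (not_not.2 hb')]
    · have hb' := mt hblk.2 hb
      by_cases h1 : v ∈ σ <;> by_cases h2 : v ∈ σ' <;> simp [hm, hb, hb', h1, h2] <;> ring
  · by_cases h1 : v ∈ σ <;> by_cases h2 : v ∈ σ' <;> simp [hm, h1, h2]

lemma sum_coinWeight_mul_disagree (hlam : ∀ v, 0 < lam v) (w : W → ℝ) (σ τ m : Finset W) (v : W) :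
    ∑ b, coinWeight lam v b * (if vertexUpdate G σ m v b = vertexUpdate G τ m v b then 0 else w v)
      = if v ∈ m then
          (if (∃ u ∈ σ, G.Adj v u) ↔ ∃ u ∈ τ, G.Adj v u then 0 else lam v / (1 + lam v) * w v)
        else (if v ∈ σ ↔ v ∈ τ then 0 else w v) := by
  by_cases hm : v ∈ m
  · by_cases hσ : ∃ u ∈ σ, G.Adj v u <;> by_cases hτ : ∃ u ∈ τ, G.Adj v u <;>
      simp [vertexUpdate, coinWeight, hm, hσ, hτ]
  · simp only [vertexUpdate, if_neg hm, decide_eq_decide, ← sum_mul, sum_coinWeight hlam, one_mul]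

lemma exists_adj_mem_symmDiff_of_not_iff {σ τ : Finset W} {v : W}
    (h : ¬((∃ u ∈ σ, G.Adj v u) ↔ ∃ u ∈ τ, G.Adj v u)) : ∃ u ∈ symmDiff σ τ, G.Adj u v := by
  by_cases hσ : ∃ u ∈ σ, G.Adj v u
  · obtain ⟨u, hu, hvu⟩ := hσ
    refine ⟨u, mem_symmDiff.2 (.inl ⟨hu, fun huτ => h ?_⟩), hvu.symm⟩
    exact ⟨fun _ => ⟨u, huτ, hvu⟩, fun _ => ⟨u, hu, hvu⟩⟩
  · obtain ⟨u, hu, hvu⟩ : ∃ u ∈ τ, G.Adj v u := by tauto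
    exact ⟨u, mem_symmDiff.2 (.inr ⟨hu, fun huσ => hσ ⟨u, huσ, hvu⟩⟩), hvu.symm⟩

end VertexUpdate

section Glauber

variable (G : SimpleGraph V) [DecidableRel G.Adj] (lam : V → ℝ) (q : Finset V → ℝ)

def pgdUpdate (σ m : Finset V) (c : V → Bool) : Finset V :=
  univ.filter fun v => vertexUpdate G σ m v (c v)

/-- Both chains use the same decision schedule and the same coins. -/
noncomputable def pgdCoupling (σ τ σ' τ' : Finset V) : ℝ :=
  ∑ m, q m * ∑ c, coinProb lam c *
    if pgdUpdate G σ m c = σ' ∧ pgdUpdate G τ m c = τ' then 1 else 0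

variable {lam}

lemma pgdUpdate_eq_iff {σ m : Finset V} {c : V → Bool} {σ' : Finset V} :
    pgdUpdate G σ m c = σ' ↔ ∀ v, vertexUpdate G σ m v (c v) = decide (v ∈ σ') := by
  simp only [pgdUpdate, Finset.ext_iff, mem_filter, mem_univ, true_and]
  exact forall_congr' fun v => by cases vertexUpdate G σ m v (c v) <;> simp

lemma mem_pgdUpdate {σ m : Finset V} {c : V → Bool} {v : V} :
    v ∈ pgdUpdate G σ m c ↔ if v ∈ m then c v = true ∧ ¬∃ w ∈ σ, G.Adj v w else v ∈ σ := by
  by_cases hv : v ∈ m <;> simp [pgdUpdate, vertexUpdate, hv]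

lemma pgdP_eq_sum_coinProb (hlam : ∀ v, 0 < lam v) (σ σ' : Finset V) :
    pgdP G lam q σ σ'
      = ∑ m, q m * ∑ c, coinProb lam c * if pgdUpdate G σ m c = σ' then 1 else 0 := by
  refine sum_congr rfl fun m _ => congrArg (q m * ·) ?_
  simp only [stepFactor_eq_sum_coinWeight G hlam, Fintype.prod_sum, prod_mul_distrib,
    Fintype.prod_boole, pgdUpdate_eq_iff, coinProb]

lemma sum_pgdCoupling_mul (σ τ : Finset V) (f : Finset V → Finset V → ℝ) :
    ∑ σ', ∑ τ', pgdCoupling G lam q σ τ σ' τ' * f σ' τ'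
      = ∑ m, q m * ∑ c, coinProb lam c * f (pgdUpdate G σ m c) (pgdUpdate G τ m c) := by
  simp only [pgdCoupling, sum_mul, mul_assoc, mul_sum]
  rw [Fintype.sum_comm_pairs]
  refine sum_congr rfl fun m _ => sum_congr rfl fun c _ => ?_
  simp [ite_and]

lemma isMarkovCoupling_pgdCoupling (hlam : ∀ v, 0 < lam v) (hq0 : ∀ m, 0 ≤ q m) :
    IsMarkovCoupling (pgdP G lam q) (pgdCoupling G lam q) where
  nonneg σ τ σ' τ' := sum_nonneg fun m _ => mul_nonneg (hq0 m) <| sum_nonneg fun c _ =>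
    mul_nonneg (coinProb_nonneg hlam c) (by split_ifs <;> norm_num)
  sum_snd σ τ σ' := by
    simpa [pgdP_eq_sum_coinProb G q hlam] using
      sum_pgdCoupling_mul G q σ τ fun σ'' _ => if σ'' = σ' then 1 else 0
  sum_fst σ τ τ' := by
    simpa [pgdP_eq_sum_coinProb G q hlam] using
      sum_pgdCoupling_mul G q σ τ fun _ τ'' => if τ'' = τ' then 1 else 0

end Glauber

section Stationarity

variable (G : SimpleGraph V) [DecidableRel G.Adj] {lam : V → ℝ} (q : Finset V → ℝ)

lemma isInd_pgdUpdate {σ m : Finset V} (hσ : IsInd G σ) (hm : IsInd G m) (c : V → Bool) :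
    IsInd G (pgdUpdate G σ m c) := by
  intro v hv w hw hvw
  rw [mem_pgdUpdate] at hv hw
  by_cases hvm : v ∈ m <;> by_cases hwm : w ∈ m <;> simp only [hvm, hwm, if_true, if_false] at hv hw
  · exact hm v hvm w hwm hvw
  · exact hv.2 ⟨w, hw, hvw⟩
  · exact hw.2 ⟨v, hv, hvw.symm⟩
  · exact hσ v hv w hw hvw

lemma pgdP_eq_zero_of_not_isInd (hlam : ∀ v, 0 < lam v) (hqsupp : ∀ m, ¬ IsInd G m → q m = 0)
    {σ σ' : Finset V} (hσ : IsInd G σ) (hσ' : ¬ IsInd G σ') : pgdP G lam q σ σ' = 0 := by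
  rw [pgdP_eq_sum_coinProb G q hlam]
  refine sum_eq_zero fun m _ => ?_
  by_cases hm : IsInd G m
  · refine mul_eq_zero_of_right _ (sum_eq_zero fun c _ => ?_)
    rw [if_neg (by rintro rfl; exact hσ' (isInd_pgdUpdate G hσ hm c)), mul_zero]
  · rw [hqsupp m hm, zero_mul]

lemma sum_pgdP (hlam : ∀ v, 0 < lam v) (hqsum : ∑ m, q m = 1) (σ : Finset V) :
    ∑ σ', pgdP G lam q σ σ' = 1 := by
  simp only [pgdP_eq_sum_coinProb G q hlam, mul_sum]
  rw [sum_comm]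
  refine (sum_congr rfl fun m _ => ?_).trans hqsum
  rw [sum_comm]
  simp only [← mul_sum, sum_ite_eq, mem_univ, if_true, mul_one]
  rw [sum_coinProb hlam, mul_one]

lemma prod_mul_prod_stepFactor_comm {σ σ' m : Finset V} (hσ : IsInd G σ) (hσ' : IsInd G σ')
    (hm : IsInd G m) :
    (∏ v ∈ σ, lam v) * ∏ v, stepFactor G lam σ m σ' v
      = (∏ v ∈ σ', lam v) * ∏ v, stepFactor G lam σ' m σ v := by
  by_cases hout : ∀ v ∉ m, (v ∈ σ ↔ v ∈ σ')
  · -- the neighbours of a scheduled vertex are not scheduled, so they agree in `σ` and `σ'`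
    have hblk : ∀ v ∈ m, ((∃ w ∈ σ, G.Adj v w) ↔ ∃ w ∈ σ', G.Adj v w) := fun v hv =>
      exists_congr fun w => and_congr_left fun hvw => hout w fun hw => hm v hv w hw hvw
    rw [← Fintype.prod_ite_mem σ lam, ← Fintype.prod_ite_mem σ' lam, ← prod_mul_distrib,
      ← prod_mul_distrib]
    exact Fintype.prod_congr _ _ fun v => weight_mul_stepFactor_comm G
      (fun hv ⟨w, hw, hvw⟩ => hσ v hv w hw hvw) (fun hv ⟨w, hw, hvw⟩ => hσ' v hv w hw hvw)
      (hblk v)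
  · obtain ⟨v, hv⟩ := not_forall.1 hout
    obtain ⟨hvm, hv⟩ := Classical.not_imp.1 hv
    have hzero : ∀ σ₁ σ₂ : Finset V, ¬(v ∈ σ₁ ↔ v ∈ σ₂) → stepFactor G lam σ₁ m σ₂ v = 0 :=
      fun σ₁ σ₂ h => by rw [stepFactor, if_neg hvm, if_neg fun h' => h h'.symm]
    rw [prod_eq_zero (mem_univ v) (hzero σ σ' hv),
      prod_eq_zero (mem_univ v) (hzero σ' σ fun h => hv h.symm),
      mul_zero, mul_zero]

lemma prodForm_eq_zero {σ : Finset V} (hσ : ¬ IsInd G σ) : prodForm G lam σ = 0 := if_neg hσ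

variable {G} in
lemma sum_isInd_prod_pos (hlam : ∀ v, 0 < lam v) :
    0 < ∑ σ ∈ univ.filter (fun s => IsInd G s), ∏ v ∈ σ, lam v :=
  sum_pos (fun _ _ => prod_pos fun v _ => hlam v)
    ⟨∅, mem_filter.2 ⟨mem_univ _, fun v hv => absurd hv (notMem_empty v)⟩⟩

lemma prodForm_nonneg (hlam : ∀ v, 0 < lam v) (σ : Finset V) : 0 ≤ prodForm G lam σ := by
  unfold prodForm
  split_ifs
  · exact div_nonneg (prod_nonneg fun v _ => (hlam v).le) (sum_isInd_prod_pos hlam).le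
  · exact le_rfl

lemma sum_prodForm (hlam : ∀ v, 0 < lam v) : ∑ σ, prodForm G lam σ = 1 := by
  rw [← sum_filter_add_sum_filter_not univ (IsInd G), sum_congr rfl fun _ hσ =>
    prodForm_eq_zero G (mem_filter.1 hσ).2, sum_const_zero, add_zero]
  unfold prodForm
  rw [sum_ite_of_true fun _ hσ => (mem_filter.1 hσ).2, ← sum_div,
    div_self (sum_isInd_prod_pos hlam).ne']

lemma prodForm_mul_pgdP_comm (hlam : ∀ v, 0 < lam v) (hqsupp : ∀ m, ¬ IsInd G m → q m = 0)
    (σ σ' : Finset V) :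
    prodForm G lam σ * pgdP G lam q σ σ' = prodForm G lam σ' * pgdP G lam q σ' σ := by
  by_cases hσ : IsInd G σ <;> by_cases hσ' : IsInd G σ'
  · simp only [prodForm, if_pos hσ, if_pos hσ', pgdP, mul_sum]
    refine sum_congr rfl fun m _ => ?_
    by_cases hm : IsInd G m
    · rw [div_mul_eq_mul_div, div_mul_eq_mul_div, mul_left_comm,
        prod_mul_prod_stepFactor_comm G hσ hσ' hm, mul_left_comm]
    · simp [hqsupp m hm]
  · rw [prodForm_eq_zero G hσ', pgdP_eq_zero_of_not_isInd G q hlam hqsupp hσ hσ', zero_mul,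
      mul_zero]
  · rw [prodForm_eq_zero G hσ, pgdP_eq_zero_of_not_isInd G q hlam hqsupp hσ' hσ, zero_mul,
      mul_zero]
  · rw [prodForm_eq_zero G hσ, prodForm_eq_zero G hσ', zero_mul, zero_mul]

lemma isStationaryDist_prodForm (hlam : ∀ v, 0 < lam v) (hqsupp : ∀ m, ¬ IsInd G m → q m = 0)
    (hqsum : ∑ m, q m = 1) : IsStationaryDist (pgdP G lam q) (prodForm G lam) :=
  .of_detailedBalance (prodForm_nonneg G hlam) (sum_prodForm G hlam) (sum_pgdP G q hlam hqsum)
    (prodForm_mul_pgdP_comm G q hlam hqsupp)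

end Stationarity

section Contraction

variable (G : SimpleGraph V) [DecidableRel G.Adj] {lam : V → ℝ} {q : Finset V → ℝ}

noncomputable def vertexWeight (lam : V → ℝ) (q : Finset V → ℝ) (v : V) : ℝ :=
  (1 + lam v) / qVert q v

lemma vertexWeight_pos (hlam : ∀ v, 0 < lam v) (hqv : ∀ v, 0 < qVert q v) (v : V) :
    0 < vertexWeight lam q v :=
  div_pos (by linarith [hlam v]) (hqv v)

lemma one_add_le_vertexWeight (hlam : ∀ v, 0 < lam v) (hq0 : ∀ m, 0 ≤ q m)
    (hqsum : ∑ m, q m = 1) (hqv : ∀ v, 0 < qVert q v) (v : V) : 1 + lam v ≤ vertexWeight lam q v :=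
  le_div_self (by linarith [hlam v]) (hqv v) <| hqsum ▸
    sum_le_sum_of_subset_of_nonneg (filter_subset _ _) fun m _ _ => hq0 m

lemma weightedHamming_pgdUpdate (w : V → ℝ) (σ τ m : Finset V) (c : V → Bool) :
    weightedHamming w (pgdUpdate G σ m c) (pgdUpdate G τ m c)
      = ∑ v, if vertexUpdate G σ m v (c v) = vertexUpdate G τ m v (c v) then 0 else w v := by
  simp [weightedHamming, Finset.sum_symmDiff_eq_sum_ite, pgdUpdate, Bool.coe_iff_coe]

lemma sum_mul_ite_mem (hqsum : ∑ m, q m = 1) (v : V) (a b : ℝ) :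
    ∑ m, q m * (if v ∈ m then a else b) = qVert q v * a + (1 - qVert q v) * b := by
  have hcompl : ∑ m ∈ univ.filter (fun m => v ∉ m), q m = 1 - qVert q v := by
    rw [← hqsum, qVert, ← sum_filter_add_sum_filter_not univ (fun m => v ∈ m), add_sub_cancel_left]
  rw [← hcompl, ← sum_filter_add_sum_filter_not univ (fun m => v ∈ m), qVert, sum_mul, sum_mul]
  congr 1 <;> refine sum_congr rfl fun m hm => ?_
  · rw [if_pos (mem_filter.1 hm).2]
  · rw [if_neg (mem_filter.1 hm).2]

lemma sum_pgdCoupling_mul_weightedHamming (hlam : ∀ v, 0 < lam v) (hqsum : ∑ m, q m = 1)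
    (hqv : ∀ v, 0 < qVert q v) (σ τ : Finset V) :
    ∑ σ', ∑ τ', pgdCoupling G lam q σ τ σ' τ' * weightedHamming (vertexWeight lam q) σ' τ'
      = ∑ v, ((if (∃ u ∈ σ, G.Adj v u) ↔ ∃ u ∈ τ, G.Adj v u then 0 else lam v)
          + if v ∈ σ ↔ v ∈ τ then 0 else vertexWeight lam q v - (1 + lam v)) := by
  set X : V → ℝ := fun v =>
    if (∃ u ∈ σ, G.Adj v u) ↔ ∃ u ∈ τ, G.Adj v u then 0
    else lam v / (1 + lam v) * vertexWeight lam q v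
  set Y : V → ℝ := fun v => if v ∈ σ ↔ v ∈ τ then 0 else vertexWeight lam q v
  have hcoins : ∀ m, ∑ c, coinProb lam c *
      weightedHamming (vertexWeight lam q) (pgdUpdate G σ m c) (pgdUpdate G τ m c)
        = ∑ v, if v ∈ m then X v else Y v := fun m => by
    simp only [weightedHamming_pgdUpdate, mul_sum]
    rw [sum_comm]
    exact sum_congr rfl fun v _ => (sum_coinProb_mul_apply hlam v _).trans
      (sum_coinWeight_mul_disagree G hlam _ σ τ m v)
  rw [sum_pgdCoupling_mul]
  simp only [hcoins, mul_sum]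
  rw [sum_comm]
  refine sum_congr rfl fun v _ => ?_
  rw [sum_mul_ite_mem hqsum]
  have hqw : qVert q v * vertexWeight lam q v = 1 + lam v := mul_div_cancel₀ _ (hqv v).ne'
  have hX : qVert q v * (lam v / (1 + lam v) * vertexWeight lam q v) = lam v := by
    rw [mul_left_comm, hqw, div_mul_cancel₀ _ (by linarith [hlam v])]
  simp only [X, Y]
  split_ifs
  · ring
  · linear_combination -hqw
  · linear_combination hX
  · linear_combination hX - hqw

lemma sum_pgdCoupling_mul_weightedHamming_le (hlam : ∀ v, 0 < lam v) (hqsum : ∑ m, q m = 1)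
    (hqv : ∀ v, 0 < qVert q v) {θ M : ℝ} (hθ : 0 ≤ θ) (hM : ∀ v, vertexWeight lam q v ≤ M)
    (hθv : ∀ v, θ ≤ 1 + lam v - ∑ u ∈ G.neighborFinset v, lam u) (σ τ : Finset V) :
    ∑ σ', ∑ τ', pgdCoupling G lam q σ τ σ' τ' * weightedHamming (vertexWeight lam q) σ' τ'
      ≤ (1 - θ / M) * weightedHamming (vertexWeight lam q) σ τ := by
  set w := vertexWeight lam q
  set B := univ.filter fun v => ¬((∃ u ∈ σ, G.Adj v u) ↔ ∃ u ∈ τ, G.Adj v u)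
  have hB : ∑ v, (if (∃ u ∈ σ, G.Adj v u) ↔ ∃ u ∈ τ, G.Adj v u then 0 else lam v)
      = ∑ v ∈ B, lam v := by
    simp only [B, sum_filter, ite_not]
  have hvertex : ∀ v, w v - (1 + lam v - ∑ u ∈ G.neighborFinset v, lam u) ≤ (1 - θ / M) * w v := by
    intro v
    have hw := vertexWeight_pos hlam hqv v
    have : θ * (w v / M) ≤ θ :=
      mul_le_of_le_one_right hθ ((div_le_one (hw.trans_le (hM v))).2 (hM v))
    linarith [hθv v, show (1 - θ / M) * w v = w v - θ * (w v / M) by ring]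
  rw [sum_pgdCoupling_mul_weightedHamming G hlam hqsum hqv, sum_add_distrib, hB,
    ← Finset.sum_symmDiff_eq_sum_ite, weightedHamming, mul_sum]
  calc ∑ v ∈ B, lam v + ∑ v ∈ symmDiff σ τ, (w v - (1 + lam v))
      ≤ ∑ v ∈ symmDiff σ τ, ∑ u ∈ G.neighborFinset v, lam u
          + ∑ v ∈ symmDiff σ τ, (w v - (1 + lam v)) :=
        add_le_add_left (G.sum_le_sum_sum_neighborFinset (fun v => (hlam v).le)
          fun v hv => exists_adj_mem_symmDiff_of_not_iff G (mem_filter.1 hv).2) _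
    _ = ∑ v ∈ symmDiff σ τ, (w v - (1 + lam v - ∑ u ∈ G.neighborFinset v, lam u)) := by
        rw [← sum_add_distrib]
        exact sum_congr rfl fun _ _ => by ring
    _ ≤ ∑ v ∈ symmDiff σ τ, (1 - θ / M) * w v := sum_le_sum fun v _ => hvertex v

end Contraction

/-- Corollary 2 of the paper: with `m = min (1+λ_v)/q_v`,
`M = max (1+λ_v)/q_v`, `ξ = M/m`, if
`θ = min_v (1 + λ_v - Σ_{w∈N_v} λ_w) > 0`, then `T_mix ≤ ⌈(M/θ) log(nξe)⌉`. -/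
theorem pgd_fast_mixing_fugacity_weights
    {V : Type*} [Fintype V] [DecidableEq V] [Nonempty V]
    (G : SimpleGraph V) [DecidableRel G.Adj]
    (lam : V → ℝ) (hlam : ∀ v, 0 < lam v)
    (q : Finset V → ℝ)
    (hq0 : ∀ m, 0 ≤ q m)
    (hqsupp : ∀ m, ¬ IsInd G m → q m = 0)
    (hqsum : ∑ m : Finset V, q m = 1)
    (hqv : ∀ v, 0 < qVert q v)
    (m M ξ θ : ℝ)
    (hm : m = univ.inf' univ_nonempty (fun v => (1 + lam v) / qVert q v))
    (hM : M = univ.sup' univ_nonempty (fun v => (1 + lam v) / qVert q v))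
    (hξ : ξ = M / m)
    (hθ : θ = univ.inf' univ_nonempty (fun v =>
      1 + lam v - ∑ w ∈ G.neighborFinset v, lam w))
    (hθpos : 0 < θ) :
    mixTime (pgdP G lam q) (prodForm G lam) (univ.filter (fun s => IsInd G s)) ≤
      ⌈(M / θ) * Real.log ((Fintype.card V : ℝ) * ξ * Real.exp 1)⌉₊ := by
  have hwM : ∀ v, vertexWeight lam q v ≤ M := fun v => hM ▸ le_sup' _ (mem_univ v)
  have hmw : ∀ v, m ≤ vertexWeight lam q v := fun v => hm ▸ inf'_le _ (mem_univ v)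
  have hθv : ∀ v, θ ≤ 1 + lam v - ∑ w ∈ G.neighborFinset v, lam w :=
    fun v => hθ ▸ inf'_le _ (mem_univ v)
  have hm0 : 0 < m := hm ▸ (lt_inf'_iff _).2 fun v _ => vertexWeight_pos hlam hqv v
  obtain ⟨v₀⟩ := ‹Nonempty V›
  have hM0 : 0 < M := hm0.trans_le ((hmw v₀).trans (hwM v₀))
  have hθM : θ ≤ M := calc
    θ ≤ 1 + lam v₀ := (hθv v₀).trans (sub_le_self _ (sum_nonneg fun w _ => (hlam w).le))
    _ ≤ M := (one_add_le_vertexWeight hlam hq0 hqsum hqv v₀).trans (hwM v₀)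
  have hw0 : ∀ v, 0 ≤ vertexWeight lam q v := fun v => (vertexWeight_pos hlam hqv v).le
  have hnξ : 0 < Fintype.card V * ξ :=
    mul_pos (Nat.cast_pos.2 Fintype.card_pos) (hξ ▸ div_pos hM0 hm0)
  set N := ⌈(M / θ) * Real.log ((Fintype.card V : ℝ) * ξ * Real.exp 1)⌉₊
  refine mixTime_le fun x _ => ?_
  calc tvDist (chainDist (pgdP G lam q) x N) (prodForm G lam)
      ≤ (1 - θ / M) ^ N * (Fintype.card V * M) / m :=
        tvDist_chainDist_le_of_contraction (isMarkovCoupling_pgdCoupling G q hlam hq0)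
          (isStationaryDist_prodForm G q hlam hqsupp hqsum) _
          (sub_nonneg.2 ((div_le_one hM0).2 hθM)) hm0 (weightedHamming_nonneg hw0)
          (fun _ _ => le_weightedHamming hmw hw0) (weightedHamming_le hw0 hwM)
          (sum_pgdCoupling_mul_weightedHamming_le G hlam hqsum hqv hθpos.le hwM hθv) x _
    _ = (1 - θ / M) ^ N * (Fintype.card V * ξ) := by
        rw [hξ]
        field_simp
    _ ≤ 1 / Real.exp 1 := one_sub_pow_mul_le_inv_exp_one (div_pos hθpos hM0)
        ((div_le_one hM0).2 hθM) hnξ (by rw [inv_div]; exact Nat.le_ceil _)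
end

section
/- Let ν ∈ ρΛ° for some ρ with 0 < ρ ≤ 1/χ and ρ < 1, where χ is the interference degree of G, and let λ be a vector of fugacities such that the stationary service rate equals the arrival rate at every link, i.e., s_i(λ) = ν_i for all i. Then λ_i ≤ ρ/(1−ρ) for every i. -/
open Finset

variable {V : Type*} [Fintype V] [DecidableEq V]

/-- The indicator vector of a finite set of vertices. -/
def indVec (s : Finset V) : V → ℝ := fun v => if v ∈ s then 1 else 0

/-- The set `Ω` of feasible schedules, as indicator vectors of independent sets. -/
def schedSet (G : SimpleGraph V) [DecidableRel G.Adj] : Set (V → ℝ) :=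
  {x | ∃ s : Finset V, IsInd G s ∧ x = indVec s}

/-- `Co(Ω)`: the convex hull of the feasible schedules. -/
def coSched (G : SimpleGraph V) [DecidableRel G.Adj] : Set (V → ℝ) :=
  convexHull ℝ (schedSet G)

/-- The capacity region `Λ° = {ν ≥ 0 : ∃ μ ∈ Co(Ω), ν < μ}`. -/
def capIntr (G : SimpleGraph V) [DecidableRel G.Adj] : Set (V → ℝ) :=
  {ν | (∀ i, 0 ≤ ν i) ∧ ∃ μ ∈ coSched G, ∀ i, ν i < μ i}

/-- `Λ = {ν ≥ 0 : ν ∈ Co(Ω)}`. -/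
def capCl (G : SimpleGraph V) [DecidableRel G.Adj] : Set (V → ℝ) :=
  {ν | (∀ i, 0 ≤ ν i) ∧ ν ∈ coSched G}

/-- The stationary service rate of link `i` under the product-form distribution. -/
noncomputable def serviceRate (G : SimpleGraph V) [DecidableRel G.Adj]
    (lam : V → ℝ) (i : V) : ℝ :=
  ∑ σ ∈ univ.filter (fun s : Finset V => i ∈ s), prodForm G lam σ

/-- The concave function `F(r;ν) = Σ_i ν_i r_i − log Σ_{σ∈Ω} exp(Σ_{i∈σ} r_i)`. -/
noncomputable def Ffun (G : SimpleGraph V) [DecidableRel G.Adj]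
    (r ν : V → ℝ) : ℝ :=
  ∑ i : V, ν i * r i -
    Real.log (∑ σ ∈ univ.filter (fun s => IsInd G s), Real.exp (∑ i ∈ σ, r i))

/-- The interference degree of a vertex: the maximum number of members of its
neighborhood that can be simultaneously active (i.e. the maximum size of an
independent subset of its neighborhood). -/
def intDeg (G : SimpleGraph V) [DecidableRel G.Adj] (i : V) : ℕ :=
  (((G.neighborFinset i).powerset.filter (fun s => IsInd G s)).sup Finset.card)

/-- The interference degree of the graph. -/
def intDegG (G : SimpleGraph V) [DecidableRel G.Adj] : ℕ :=
  univ.sup (intDeg G)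

/-!
Write `w(σ) = ∏_{v∈σ} λ_v` and `Z = Σ_σ w(σ)` over independent sets. Removing `i` is a
bijection from the independent sets containing `i` onto those avoiding the closed
neighbourhood of `i`, so `s_i = λ_i q_i`, where `q_i` is the probability of the latter event.
Every independent set contains `i`, meets `N_i`, or avoids `{i} ∪ N_i`, hence
`q_i ≥ 1 - s_i - Σ_{j∈N_i} s_j` and `λ_i (1 - ν_i - Σ_{j∈N_i} ν_j) ≤ ν_i`.
On the other hand `x ↦ x_i + ρ Σ_{j∈N_i} x_j` is at most `max(1, ρχ) = 1` on every schedule,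
hence on `Co(Ω)`; for `ν = ρμ` with `μ` strictly below a point of `Co(Ω)` this gives
`μ_i + ρ Σ_{j∈N_i} μ_j < 1`, which is exactly what turns the first inequality into
`λ_i ≤ ρ/(1-ρ)`.
-/

lemma IsInd.mono {W : Type*} {G : SimpleGraph W} [DecidableRel G.Adj] {s t : Finset W}
    (hs : IsInd G s) (hts : t ⊆ s) : IsInd G t :=
  fun v hv w hw => hs v (hts hv) w (hts hw)

lemma IsInd.disjoint_neighborFinset {W : Type*} {G : SimpleGraph W} [DecidableRel G.Adj]
    {s : Finset W} (hs : IsInd G s) {i : W} [Fintype (G.neighborSet i)] (hi : i ∈ s) :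
    Disjoint (G.neighborFinset i) s :=
  Finset.disjoint_left.mpr fun j hj hjs => hs i hi j hjs ((G.mem_neighborFinset i j).mp hj)

lemma IsInd.insert_of_disjoint_neighborFinset {W : Type*} {G : SimpleGraph W}
    [DecidableRel G.Adj] [DecidableEq W] {s : Finset W} (hs : IsInd G s) {i : W}
    [Fintype (G.neighborSet i)] (hi : Disjoint (G.neighborFinset i) s) : IsInd G (insert i s) := by
  have hnadj : ∀ j ∈ s, ¬ G.Adj i j := fun j hj hij =>
    Finset.disjoint_left.mp hi ((G.mem_neighborFinset i j).mpr hij) hj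
  intro v hv w hw
  rcases Finset.mem_insert.mp hv with rfl | hvs <;> rcases Finset.mem_insert.mp hw with rfl | hws
  · exact G.irrefl
  · exact hnadj w hws
  · exact fun h => hnadj v hvs h.symm
  · exact hs v hvs w hws

lemma card_neighborFinset_inter_le_intDegG (G : SimpleGraph V) [DecidableRel G.Adj]
    {s : Finset V} (hs : IsInd G s) (i : V) : #(G.neighborFinset i ∩ s) ≤ intDegG G := by
  have hmem : G.neighborFinset i ∩ s ∈ (G.neighborFinset i).powerset.filter (IsInd G) :=
    Finset.mem_filter.mpr ⟨Finset.mem_powerset.mpr Finset.inter_subset_left,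
      hs.mono Finset.inter_subset_right⟩
  exact (Finset.le_sup hmem).trans (Finset.le_sup (f := intDeg G) (Finset.mem_univ i))

section Weights

variable (G : SimpleGraph V) [DecidableRel G.Adj] (lam : V → ℝ)

noncomputable def partitionFn : ℝ :=
  ∑ σ ∈ univ.filter (fun s => IsInd G s), ∏ v ∈ σ, lam v

noncomputable def occupiedWeight (j : V) : ℝ :=
  ∑ σ ∈ (univ.filter (fun s => IsInd G s)).filter (j ∈ ·), ∏ v ∈ σ, lam v

noncomputable def vacantWeight (i : V) : ℝ :=
  ∑ σ ∈ (univ.filter (fun s => IsInd G s)).filter (Disjoint (insert i (G.neighborFinset i))),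
    ∏ v ∈ σ, lam v

variable {lam}

lemma one_le_partitionFn (hlam : ∀ v, 0 ≤ lam v) : 1 ≤ partitionFn G lam := by
  have hempty : (∅ : Finset V) ∈ univ.filter (fun s => IsInd G s) :=
    Finset.mem_filter.mpr ⟨Finset.mem_univ _, by simp [IsInd]⟩
  rw [partitionFn]
  simpa using Finset.single_le_sum (f := fun σ => ∏ v ∈ σ, lam v)
    (fun σ _ => Finset.prod_nonneg fun v _ => hlam v) hempty

lemma serviceRate_eq_div (j : V) :
    serviceRate G lam j = occupiedWeight G lam j / partitionFn G lam := by
  rw [serviceRate, occupiedWeight, Finset.sum_div, Finset.filter_comm,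
    Finset.sum_filter (p := fun s => IsInd G s)]
  rfl

lemma occupiedWeight_eq_mul_vacantWeight (i : V) :
    occupiedWeight G lam i = lam i * vacantWeight G lam i := by
  rw [occupiedWeight, vacantWeight, Finset.mul_sum]
  refine Finset.sum_nbij' (fun σ => σ.erase i) (fun τ => insert i τ) ?_ ?_ ?_ ?_ ?_
  · intro σ hσ
    simp only [Finset.mem_filter, Finset.mem_univ, true_and] at hσ ⊢
    refine ⟨hσ.1.mono (Finset.erase_subset i σ),
      Finset.disjoint_insert_left.mpr ⟨Finset.notMem_erase i σ, ?_⟩⟩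
    exact (hσ.1.disjoint_neighborFinset hσ.2).mono_right (Finset.erase_subset i σ)
  · intro τ hτ
    simp only [Finset.mem_filter, Finset.mem_univ, true_and] at hτ ⊢
    obtain ⟨-, hNτ⟩ := Finset.disjoint_insert_left.mp hτ.2
    exact ⟨hτ.1.insert_of_disjoint_neighborFinset hNτ, Finset.mem_insert_self i τ⟩
  · intro σ hσ
    simp only [Finset.mem_filter, Finset.mem_univ, true_and] at hσ
    exact Finset.insert_erase hσ.2
  · intro τ hτ
    simp only [Finset.mem_filter, Finset.mem_univ, true_and] at hτ
    exact Finset.erase_insert (Finset.disjoint_insert_left.mp hτ.2).1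
  · intro σ hσ
    simp only [Finset.mem_filter, Finset.mem_univ, true_and] at hσ
    exact (Finset.mul_prod_erase σ lam hσ.2).symm

lemma partitionFn_le_occupiedWeight_add_vacantWeight (hlam : ∀ v, 0 ≤ lam v) (i : V) :
    partitionFn G lam ≤ occupiedWeight G lam i +
      ∑ j ∈ G.neighborFinset i, occupiedWeight G lam j + vacantWeight G lam i := by
  simp only [partitionFn, occupiedWeight, vacantWeight,
    Finset.sum_filter (s := univ.filter fun s => IsInd G s)]
  rw [Finset.sum_comm (s := G.neighborFinset i), ← Finset.sum_add_distrib,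
    ← Finset.sum_add_distrib]
  refine Finset.sum_le_sum fun σ _ => ?_
  have hw : 0 ≤ ∏ v ∈ σ, lam v := Finset.prod_nonneg fun v _ => hlam v
  have hcover : i ∈ σ ∨ (∃ j ∈ G.neighborFinset i, j ∈ σ) ∨
      Disjoint (insert i (G.neighborFinset i)) σ := by
    rw [Finset.disjoint_insert_left, Finset.disjoint_left]
    by_cases hi : i ∈ σ
    · exact Or.inl hi
    by_cases hN : ∃ j ∈ G.neighborFinset i, j ∈ σ
    · exact Or.inr (Or.inl hN)
    push Not at hN
    exact Or.inr (Or.inr ⟨hi, hN⟩)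
  have hterm : ∀ p : Prop, [Decidable p] → 0 ≤ if p then ∏ v ∈ σ, lam v else 0 :=
    fun p _ => by split <;> simp [hw]
  have hnbr : 0 ≤ ∑ j ∈ G.neighborFinset i, if j ∈ σ then ∏ v ∈ σ, lam v else 0 :=
    Finset.sum_nonneg fun j _ => hterm _
  rcases hcover with hi | ⟨j, hj, hjσ⟩ | hdisj
  · rw [if_pos hi]
    linarith [hterm (Disjoint (insert i (G.neighborFinset i)) σ)]
  · have hjw := Finset.single_le_sum (f := fun j => if j ∈ σ then ∏ v ∈ σ, lam v else 0)
      (fun j _ => hterm _) hj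
    rw [if_pos hjσ] at hjw
    linarith [hterm (i ∈ σ), hterm (Disjoint (insert i (G.neighborFinset i)) σ)]
  · rw [if_pos hdisj]
    linarith [hterm (i ∈ σ)]

lemma fugacity_mul_le_serviceRate (hlam : ∀ v, 0 ≤ lam v) (i : V) :
    lam i * (1 - serviceRate G lam i - ∑ j ∈ G.neighborFinset i, serviceRate G lam j) ≤
      serviceRate G lam i := by
  have hZ : 0 < partitionFn G lam := one_pos.trans_le (one_le_partitionFn G hlam)
  simp only [serviceRate_eq_div, ← Finset.sum_div]
  have hvacant : 1 - occupiedWeight G lam i / partitionFn G lam -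
      (∑ j ∈ G.neighborFinset i, occupiedWeight G lam j) / partitionFn G lam ≤
        vacantWeight G lam i / partitionFn G lam := by
    rw [le_div_iff₀ hZ, sub_mul, sub_mul, div_mul_cancel₀ _ hZ.ne', div_mul_cancel₀ _ hZ.ne']
    linarith [partitionFn_le_occupiedWeight_add_vacantWeight G hlam i]
  calc _ ≤ lam i * (vacantWeight G lam i / partitionFn G lam) :=
        mul_le_mul_of_nonneg_left hvacant (hlam i)
    _ = occupiedWeight G lam i / partitionFn G lam := by
        rw [occupiedWeight_eq_mul_vacantWeight, mul_div_assoc]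

end Weights

lemma add_mul_sum_neighborFinset_le_one_of_mem_coSched (G : SimpleGraph V) [DecidableRel G.Adj]
    (i : V) {t : ℝ} (ht₀ : 0 ≤ t) (ht : t * intDegG G ≤ 1) {x : V → ℝ} (hx : x ∈ coSched G) :
    x i + t * ∑ j ∈ G.neighborFinset i, x j ≤ 1 := by
  have hlin : IsLinearMap ℝ fun x : V → ℝ => x i + t * ∑ j ∈ G.neighborFinset i, x j :=
    ⟨fun x y => by simp only [Pi.add_apply, Finset.sum_add_distrib]; ring,
      fun c x => by simp only [Pi.smul_apply, smul_eq_mul, ← Finset.mul_sum]; ring⟩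
  refine convexHull_min ?_ (convex_halfSpace_le hlin 1) hx
  rintro _ ⟨s, hs, rfl⟩
  simp only [Set.mem_ofPred_eq, indVec, Finset.sum_boole, Finset.filter_mem_eq_inter]
  by_cases hi : i ∈ s
  · simp [hi, Finset.disjoint_iff_inter_eq_empty.mp (hs.disjoint_neighborFinset hi)]
  · have hcard : t * #(G.neighborFinset i ∩ s) ≤ t * intDegG G := by
      gcongr
      exact card_neighborFinset_inter_le_intDegG G hs i
    simpa [hi] using hcard.trans ht

/-- Lemma 2 of the paper: if `ν ∈ ρΛ°` with
`0 < ρ ≤ 1/χ` and `ρ < 1`, and the fugacities `λ` give service rates exactly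
equal to `ν`, then `λ_i ≤ ρ/(1-ρ)` for every link `i`. -/
theorem fugacity_bound
    {V : Type*} [Fintype V] [DecidableEq V]
    (G : SimpleGraph V) [DecidableRel G.Adj]
    (ρ : ℝ) (hρ0 : 0 < ρ) (hρχ : ρ ≤ 1 / (intDegG G : ℝ)) (hρ1 : ρ < 1)
    (ν : V → ℝ) (hν : ∃ μ ∈ capIntr G, ν = fun i => ρ * μ i)
    (lam : V → ℝ) (hlam : ∀ i, 0 < lam i)
    (hs : ∀ i, serviceRate G lam i = ν i) :
    ∀ i, lam i ≤ ρ / (1 - ρ) := by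
  intro i
  obtain ⟨μ, ⟨hμ0, μ', hμ', hμμ'⟩, rfl⟩ := hν
  have hρχ' : ρ * intDegG G ≤ 1 := by
    rcases Nat.eq_zero_or_pos (intDegG G) with h | h
    · simp [h]
    · exact (le_div_iff₀ (by exact_mod_cast h)).mp hρχ
  set S := ∑ j ∈ G.neighborFinset i, μ j
  have hslack : μ i + ρ * S < 1 := by
    have hS : ρ * S ≤ ρ * ∑ j ∈ G.neighborFinset i, μ' j :=
      mul_le_mul_of_nonneg_left (Finset.sum_le_sum fun j _ => (hμμ' j).le) hρ0.le
    linarith [hμμ' i, add_mul_sum_neighborFinset_le_one_of_mem_coSched G i hρ0.le hρχ' hμ']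
  have hfug := fugacity_mul_le_serviceRate G (fun v => (hlam v).le) i
  simp only [hs, ← Finset.mul_sum] at hfug
  have hD : (1 - ρ) * μ i < 1 - ρ * μ i - ρ * S := by linarith
  have hD₀ : 0 < 1 - ρ * μ i - ρ * S :=
    (mul_nonneg (sub_pos.mpr hρ1).le (hμ0 i)).trans_lt hD
  rw [le_div_iff₀ (sub_pos.mpr hρ1)]
  refine le_of_mul_le_mul_right ?_ hD₀
  calc lam i * (1 - ρ) * (1 - ρ * μ i - ρ * S)
      = (1 - ρ) * (lam i * (1 - ρ * μ i - ρ * S)) := by ring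
    _ ≤ (1 - ρ) * (ρ * μ i) := by gcongr
    _ = ρ * ((1 - ρ) * μ i) := by ring
    _ ≤ ρ * (1 - ρ * μ i - ρ * S) := by gcongr
end
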